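/- arXiv:1005.4168 — 9 statements merged into one kernel-verified Lean document; each statement's English description precedes it below -/
import Mathlib

section
/- If a ring R is right almost perfect and R is not a prime ring, then R is right perfect. -/
universe u

/-- A ring is *right perfect* if it satisfies the descending chain condition
on principal left ideals. -/
def IsRightPerfectRing (R : Type u) [Ring R] : Prop :=
  ∀ f : ℕ → R, (∀ n, Ideal.span {f (n + 1)} ≤ Ideal.span {f n}) →
    ∃ N, ∀ n, N ≤ n → Ideal.span {f n} = Ideal.span {f N}

/-- A ring is *right almost perfect* if `R/I` is right perfect for every
two-sided ideal `I` with `0 ≠ I ≠ R`. -/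
def IsRightAlmostPerfectRing (R : Type u) [Ring R] : Prop :=
  ∀ I : TwoSidedIdeal R, I ≠ ⊥ → I ≠ ⊤ → IsRightPerfectRing I.ringCon.Quotient

/-- A ring is *prime* if `I * J = 0` implies `I = 0` or `J = 0` for two-sided ideals. -/
def IsPrimeRing (R : Type u) [Ring R] : Prop :=
  ∀ I J : TwoSidedIdeal R, (∀ a ∈ I, ∀ b ∈ J, a * b = 0) → I = ⊥ ∨ J = ⊥

/-!
Pick nonzero two-sided ideals `I`, `J` with `I J = 0`. A descending chain
`R f₀ ⊇ R f₁ ⊇ ⋯` stabilizes modulo `J` from some `M` on, so `f M ∈ R f n + J` for `n ≥ M`;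
multiplying on the left by `I` kills `J`, whence `I R f M ⊆ L := ⋂_{n ≥ M} R f n`.
If `f M ∉ L`, the two-sided ideal `Z = {c | c R f M ⊆ L}` is nonzero (it contains `I`) and
proper, so `R / Z` is right perfect too. Writing `f (M + n) = g n * f M` with `R g₀ ⊇ R g₁ ⊇ ⋯`,
the `g`-chain stabilizes modulo `Z` at some `K`, and this puts `f (M + K)` into `L`.
-/

section

variable {R : Type u} [Ring R] {f : ℕ → R}

/-- The annihilator of the cyclic submodule `R (a + L)` of `R ⧸ L`. -/
def Ideal.twoSidedColon (L : Ideal R) (a : R) : TwoSidedIdeal R :=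
  TwoSidedIdeal.mk' {c | ∀ r, c * r * a ∈ L}
    (fun r => by simp)
    (fun hc hd r => by simpa only [add_mul] using L.add_mem (hc r) (hd r))
    (fun hc r => by simpa only [neg_mul] using L.neg_mem (hc r))
    (fun {s c} hc r => by simpa only [mul_assoc] using L.mul_mem_left s (hc r))
    (fun {c s} hc r => by simpa only [mul_assoc] using hc (s * r))

namespace Ideal

variable {L L' : Ideal R} {a c d : R}

theorem mem_twoSidedColon : c ∈ L.twoSidedColon a ↔ ∀ r, c * r * a ∈ L :=
  TwoSidedIdeal.mem_mk' _ _ _ _ _ _ _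

theorem twoSidedColon_mono (h : L ≤ L') : L.twoSidedColon a ≤ L'.twoSidedColon a :=
  fun _ hc => mem_twoSidedColon.mpr fun r => h (mem_twoSidedColon.mp hc r)

theorem twoSidedColon_ne_top (ha : a ∉ L) : L.twoSidedColon a ≠ ⊤ := fun h =>
  ha (by simpa using mem_twoSidedColon.mp (h ▸ TwoSidedIdeal.mem_top R : (1 : R) ∈ _) 1)

theorem mul_mem_of_sub_mem_twoSidedColon (h : c - d ∈ L.twoSidedColon a) (hd : d * a ∈ L) :
    c * a ∈ L := by
  simpa [sub_mul] using L.add_mem (mem_twoSidedColon.mp h 1) hd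

end Ideal

theorem TwoSidedIdeal.ne_top_of_mul_eq_zero {I J : TwoSidedIdeal R}
    (hIJ : ∀ a ∈ I, ∀ b ∈ J, a * b = 0) (hI : I ≠ ⊥) : J ≠ ⊤ := by
  rintro rfl
  refine hI (TwoSidedIdeal.ext fun a => ⟨fun ha => ?_, fun ha => ?_⟩)
  · simpa using hIJ a ha 1 (TwoSidedIdeal.mem_top R)
  · rw [(TwoSidedIdeal.mem_bot R).mp ha]
    exact I.zero_mem

theorem exists_sub_mul_mem_of_isRightPerfectRing_quotient
    (hf : ∀ n, Ideal.span {f (n + 1)} ≤ Ideal.span {f n}) (K : TwoSidedIdeal R)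
    (hK : IsRightPerfectRing K.ringCon.Quotient) :
    ∃ M, ∀ n, M ≤ n → ∃ k, f M - k * f n ∈ K := by
  let φ := K.ringCon.mk'
  obtain ⟨M, hM⟩ := hK (φ ∘ f) fun n => by
    have := Ideal.map_mono (f := φ) (hf n)
    rwa [Ideal.map_span, Ideal.map_span, Set.image_singleton, Set.image_singleton] at this
  refine ⟨M, fun n hn => ?_⟩
  have hfM : φ (f M) ∈ Ideal.span {φ (f n)} := by
    have := hM n hn
    simp only [Function.comp_apply] at this
    rw [this]
    exact Ideal.mem_span_singleton_self _
  obtain ⟨q, hq⟩ := Ideal.mem_span_singleton'.mp hfM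
  obtain ⟨k, rfl⟩ := K.ringCon.mk'_surjective q
  rw [← map_mul, eq_comm, RingCon.coe_mk', RingCon.eq, TwoSidedIdeal.rel_iff] at hq
  exact ⟨k, hq⟩

theorem span_singleton_eq_of_mem_iInf (hf : ∀ n, Ideal.span {f (n + 1)} ≤ Ideal.span {f n})
    {N : ℕ} (hN : f N ∈ ⨅ n ≥ N, Ideal.span {f n}) :
    ∀ n, N ≤ n → Ideal.span {f n} = Ideal.span {f N} := fun n hn =>
  le_antisymm (antitone_nat_of_succ_le (f := fun n => Ideal.span {f n}) hf hn)
    ((Ideal.span_singleton_le_iff_mem _).mpr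
      ((Submodule.mem_iInf _).mp ((Submodule.mem_iInf _).mp hN n) hn))

theorem exists_mul_eq_of_span_singleton_le (hf : ∀ n, Ideal.span {f (n + 1)} ≤ Ideal.span {f n})
    (M : ℕ) : ∃ g : ℕ → R, (∀ n, Ideal.span {g (n + 1)} ≤ Ideal.span {g n}) ∧
      ∀ n, g n * f M = f (M + n) := by
  choose s hs using fun n => Ideal.mem_span_singleton'.mp (hf n (Ideal.mem_span_singleton_self _))
  let g : ℕ → R := fun n => Nat.rec 1 (fun k gk => s (M + k) * gk) n
  refine ⟨g, fun n => ?_, fun n => ?_⟩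
  · exact (Ideal.span_singleton_le_iff_mem _).mpr
      (Ideal.mem_span_singleton'.mpr ⟨s (M + n), rfl⟩)
  · induction n with
    | zero => simp [g]
    | succ n ih => rw [← add_assoc, ← hs, ← ih]; simp only [g, mul_assoc]

theorem le_twoSidedColon_of_mul_eq_zero {I J : TwoSidedIdeal R}
    (hIJ : ∀ a ∈ I, ∀ b ∈ J, a * b = 0) {M : ℕ} (hM : ∀ n, M ≤ n → ∃ k, f M - k * f n ∈ J) :
    I ≤ (⨅ n ≥ M, Ideal.span {f n}).twoSidedColon (f M) :=
  fun a ha => Ideal.mem_twoSidedColon.mpr fun r =>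
    (Submodule.mem_iInf _).mpr fun n => (Submodule.mem_iInf _).mpr fun hn => by
      obtain ⟨k, hk⟩ := hM n hn
      have hkill := hIJ _ (I.mul_mem_right a r ha) _ hk
      rw [mul_sub, sub_eq_zero, ← mul_assoc] at hkill
      exact hkill ▸ Ideal.mul_mem_left _ _ (Ideal.mem_span_singleton_self _)

theorem mem_iInf_span_singleton_of_sub_mul_mem_twoSidedColon {g : ℕ → R} {M K : ℕ}
    (hgf : ∀ n, g n * f M = f (M + n))
    (hK : ∀ n, K ≤ n → ∃ k, g K - k * g n ∈ (⨅ n ≥ M, Ideal.span {f n}).twoSidedColon (f M)) :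
    f (M + K) ∈ ⨅ n ≥ M + K, Ideal.span {f n} := by
  refine (Submodule.mem_iInf _).mpr fun n => (Submodule.mem_iInf _).mpr fun hn => ?_
  obtain ⟨k, hk⟩ := hK (n - M) (by omega)
  rw [← hgf]
  refine Ideal.mul_mem_of_sub_mem_twoSidedColon
    (Ideal.twoSidedColon_mono (iInf₂_le n (by omega)) hk) ?_
  rw [mul_assoc, hgf, Nat.add_sub_cancel' (by omega)]
  exact Ideal.mul_mem_left _ _ (Ideal.mem_span_singleton_self _)

end

theorem stmt0 {R : Type u} [Ring R] (h1 : IsRightAlmostPerfectRing R)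
    (h2 : ¬ IsPrimeRing R) : IsRightPerfectRing R := by
  obtain ⟨I, J, hIJ, hI, hJ⟩ :
      ∃ I J : TwoSidedIdeal R, (∀ a ∈ I, ∀ b ∈ J, a * b = 0) ∧ I ≠ ⊥ ∧ J ≠ ⊥ := by
    simpa [IsPrimeRing, not_or] using h2
  intro f hf
  obtain ⟨M, hM⟩ := exists_sub_mul_mem_of_isRightPerfectRing_quotient hf J
    (h1 J hJ (TwoSidedIdeal.ne_top_of_mul_eq_zero hIJ hI))
  by_cases hfM : f M ∈ ⨅ n ≥ M, Ideal.span {f n}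
  · exact ⟨M, span_singleton_eq_of_mem_iInf hf hfM⟩
  have hIZ := le_twoSidedColon_of_mul_eq_zero hIJ hM
  obtain ⟨g, hg, hgf⟩ := exists_mul_eq_of_span_singleton_le hf M
  obtain ⟨K, hK⟩ := exists_sub_mul_mem_of_isRightPerfectRing_quotient hg _
    (h1 _ (ne_bot_of_le_ne_bot hI hIZ) (Ideal.twoSidedColon_ne_top hfM))
  exact ⟨M + K, span_singleton_eq_of_mem_iInf hf
    (mem_iInf_span_singleton_of_sub_mul_mem_twoSidedColon hgf hK)⟩
end

section
/- If R is a prime right almost perfect ring, then R is h-local. -/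
universe u

/-- A ring is *semilocal* if it is semisimple modulo its Jacobson radical. -/
def IsSemilocalRing (R : Type u) [Ring R] : Prop :=
  IsSemisimpleModule R (R ⧸ Ideal.jacobson (⊥ : Ideal R))

/-- A two-sided ideal `P ≠ R` is *prime* if `I * J ⊆ P` implies `I ⊆ P` or `J ⊆ P`
for all two-sided ideals `I`, `J`. -/
def TwoSidedIdeal.IsPrimeTwoSided {R : Type u} [Ring R] (P : TwoSidedIdeal R) : Prop :=
  P ≠ ⊤ ∧ ∀ I J : TwoSidedIdeal R, (∀ a ∈ I, ∀ b ∈ J, a * b ∈ P) → I ≤ P ∨ J ≤ P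

/-- A (prime) ring is *h-local* if all proper quotients by nonzero two-sided ideals are
semilocal and every nonzero prime two-sided ideal is contained in exactly one maximal
two-sided ideal. -/
def IsHLocalRing (R : Type u) [Ring R] : Prop :=
  (∀ I : TwoSidedIdeal R, I ≠ ⊥ → I ≠ ⊤ → IsSemilocalRing I.ringCon.Quotient) ∧
  (∀ P : TwoSidedIdeal R, P ≠ ⊥ → P.IsPrimeTwoSided →
    ∃! M : TwoSidedIdeal R, IsCoatom M ∧ P ≤ M)

/-!
DCC on principal left ideals of `R` passes to the cyclic submodules of every quotient
`R / N`, since a strict inclusion `R x̄ < R ȳ` there lifts to `R x < R y` in `R`. A module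
with this DCC and zero Jacobson radical is semisimple: if some element lies outside the socle, take
one, `y`, with `R y` minimal; a simple `L ≤ R y` and a maximal submodule `m` missing `L`
decompose `y = l + y'` with `R y' < R y` and `y'` still outside the socle. Applied to
`R / J(R)` this makes every right perfect ring semilocal.

If `P ≠ 0` is prime, `R / P` is a prime right perfect ring. Its radical vanishes: a nonzero
`c ∈ J` with `R c` minimal admits `a ∈ J` with `a c ≠ 0` by primeness, and minimality gives
`c = u a c`, so `c = 0`. Hence `R / P` is semisimple, which forces `P` to be maximal, and
then `P` is the only maximal ideal containing `P`.
-/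

open Submodule

section CyclicDCC

variable {S M N : Type*} [Ring S] [AddCommGroup M] [Module S M] [AddCommGroup N] [Module S N]

theorem wellFounded_span_singleton_of_surjective {f : M →ₗ[S] N} (hf : Function.Surjective f)
    (h : WellFounded fun x y : M => span S {x} < span S {y}) :
    WellFounded fun x y : N => span S {x} < span S {y} := by
  have span_image (z : M) : span S {f z} = (span S {z}).map f := by
    rw [map_span, Set.image_singleton]
  refine ⟨fun y => ?_⟩
  obtain ⟨y, rfl⟩ := hf y
  induction y using h.induction with | _ y ih => ?_
  refine ⟨_, fun x hxy => ?_⟩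
  obtain ⟨r, rfl⟩ := mem_span_singleton.1 (span_singleton_le_iff_mem _ _ |>.1 hxy.le)
  rw [← map_smul]
  refine ih _ (lt_of_le_of_ne (span_singleton_smul_le _ _ _) fun h => hxy.ne ?_)
  rw [← map_smul, span_image, span_image, h]

theorem Submodule.isAtomic_of_wellFounded_span_singleton
    (h : WellFounded fun x y : M => span S {x} < span S {y}) : IsAtomic (Submodule S M) := by
  refine ⟨fun W => or_iff_not_imp_left.2 fun hW => ?_⟩
  obtain ⟨x, ⟨hxW, hx0⟩, hmin⟩ :=
    h.has_min {x | x ∈ W ∧ x ≠ 0} ((Submodule.ne_bot_iff W).1 hW)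
  have hxW' : span S {x} ≤ W := (span_singleton_le_iff_mem _ _).2 hxW
  refine ⟨span S {x}, ⟨by simpa using hx0, fun L hL => ?_⟩, hxW'⟩
  by_contra hL0
  obtain ⟨y, hyL, hy0⟩ := (Submodule.ne_bot_iff L).1 hL0
  exact hmin y ⟨hxW' (hL.le hyL), hy0⟩
    (lt_of_le_of_lt ((span_singleton_le_iff_mem _ _).2 hyL) hL)

theorem Module.exists_isCoatom_notMem_of_jacobson_eq_bot (hJ : Module.jacobson S M = ⊥)
    {x : M} (hx : x ≠ 0) : ∃ m : Submodule S M, IsCoatom m ∧ x ∉ m := by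
  by_contra! h
  exact hx ((mem_bot S).1 (hJ ▸ mem_sInf.2 h))

theorem IsSemisimpleModule.of_wellFounded_span_singleton
    (h : WellFounded fun x y : M => span S {x} < span S {y}) (hJ : Module.jacobson S M = ⊥) :
    IsSemisimpleModule S M := by
  rw [isSemisimpleModule_iff]
  refine complementedLattice_of_sSup_atoms_eq_top (eq_top_iff'.2 fun y => ?_)
  set A := sSup {L : Submodule S M | IsAtom L}
  by_contra hy
  obtain ⟨y, hyA, hmin⟩ := h.has_min {y | y ∉ A} ⟨y, hy⟩
  have hy0 : span S {y} ≠ ⊥ := by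
    rw [Ne, span_singleton_eq_bot]; rintro rfl; exact hyA A.zero_mem
  obtain ⟨L, hL, hLy⟩ := ((isAtomic_of_wellFounded_span_singleton h).eq_bot_or_exists_atom_le
    (span S {y})).resolve_left hy0
  obtain ⟨x, hxL, hx0⟩ := (Submodule.ne_bot_iff L).1 hL.1
  obtain ⟨m, hm, hxm⟩ := Module.exists_isCoatom_notMem_of_jacobson_eq_bot hJ hx0
  have hLm : L ⊔ m = ⊤ :=
    hm.2 _ (lt_of_le_of_ne le_sup_right fun he => hxm (he ▸ mem_sup_left hxL))
  -- split `y` along `L ⊔ m`; the `m`-component is a smaller generator still outside `A`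
  obtain ⟨l, hl, y', hy', rfl⟩ := mem_sup.1 (hLm ▸ mem_top : y ∈ L ⊔ m)
  have hlA : l ∈ A := le_sSup (α := Submodule S M) hL hl
  have hlt : span S {y'} < span S {l + y'} := by
    refine lt_of_le_of_ne ((span_singleton_le_iff_mem _ _).2 ?_) fun he => hxm ?_
    · simpa using sub_mem (mem_span_singleton_self (l + y')) (hLy hl)
    · exact (span_singleton_le_iff_mem _ _).2 hy' (he ▸ hLy hxL)
  exact hmin y' (fun hy'A => hyA (add_mem hlA hy'A)) hlt

end CyclicDCC

namespace TwoSidedIdeal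

variable {R : Type u} [Ring R] {P : TwoSidedIdeal R}

theorem mem_or_mem_of_forall_mul_mul_mem
    (hP : ∀ I J : TwoSidedIdeal R,
      (∀ a ∈ I, ∀ b ∈ J, a * b ∈ P) → I ≤ P ∨ J ≤ P)
    {a b : R} (hab : ∀ r, a * r * b ∈ P) : a ∈ P ∨ b ∈ P := by
  -- `a` lies in the ideal `I` of all `x` with `x * R * b ⊆ P`, and `b` in `{y | I * y ⊆ P}`
  let I : TwoSidedIdeal R := .mk' {x | ∀ r, x * r * b ∈ P}
    (fun r => by simp)
    (fun hx hy r => by simpa [add_mul] using P.add_mem (hx r) (hy r))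
    (fun hx r => by simpa using P.neg_mem (hx r))
    (fun {x y} hy r => by simpa [mul_assoc] using P.mul_mem_left x _ (hy r))
    (fun {x y} hx r => by simpa [mul_assoc] using hx (y * r))
  let J : TwoSidedIdeal R := .mk' {y | ∀ x ∈ I, x * y ∈ P}
    (fun x _ => by simp)
    (fun hy hy' x hx => by simpa [mul_add] using P.add_mem (hy x hx) (hy' x hx))
    (fun hy x hx => by simpa using P.neg_mem (hy x hx))
    (fun {c y} hy x hx => by simpa [mul_assoc] using hy (x * c) (I.mul_mem_right x c hx))
    (fun {y c} hy x hx => by simpa [mul_assoc] using P.mul_mem_right _ c (hy x hx))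
  refine (hP I J fun x hx y hy => (mem_mk' ..).1 hy x hx).imp (fun h => h ?_) (fun h => h ?_)
  · exact (mem_mk' ..).2 hab
  · exact (mem_mk' ..).2 fun x hx => by simpa using (mem_mk' ..).1 hx 1

theorem IsPrimeTwoSided.mem_or_mem (hP : P.IsPrimeTwoSided) {a b : R}
    (hab : ∀ r, a * r * b ∈ P) : a ∈ P ∨ b ∈ P :=
  mem_or_mem_of_forall_mul_mul_mem hP.2 hab

theorem ringCon_mk'_eq_zero_iff {x : R} : P.ringCon.mk' x = 0 ↔ x ∈ P := by
  rw [← mem_ker, ker_ringCon_mk']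

theorem eq_bot_of_comap_ringCon_mk'_le {I : TwoSidedIdeal P.ringCon.Quotient}
    (h : I.comap P.ringCon.mk' ≤ P) : I = ⊥ := by
  refine eq_bot_iff.2 fun x hx => ?_
  obtain ⟨a, rfl⟩ := P.ringCon.mk'_surjective x
  exact (mem_bot _).2 (ringCon_mk'_eq_zero_iff.2 (h (mem_comap _ |>.2 hx)))

theorem IsPrimeTwoSided.isPrimeRing_quotient (hP : P.IsPrimeTwoSided) :
    IsPrimeRing P.ringCon.Quotient := by
  intro I J hIJ
  refine (hP.2 (I.comap P.ringCon.mk') (J.comap P.ringCon.mk') fun a ha b hb => ?_).imp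
    eq_bot_of_comap_ringCon_mk'_le eq_bot_of_comap_ringCon_mk'_le
  rw [← ringCon_mk'_eq_zero_iff, map_mul]
  exact hIJ _ ((mem_comap _).1 ha) _ ((mem_comap _).1 hb)

theorem IsPrimeTwoSided.isCoatom_of_isSemisimpleRing (hP : P.IsPrimeTwoSided)
    [IsSemisimpleRing P.ringCon.Quotient] : IsCoatom P := by
  refine ⟨hP.1, fun I hPI => ?_⟩
  by_contra hI
  obtain ⟨a, haI, haP⟩ := SetLike.exists_of_lt hPI
  obtain ⟨C, hC⟩ := exists_isCompl (I.asIdeal.map P.ringCon.mk')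
  have hC0 : C ≠ ⊥ := by
    rintro rfl
    obtain ⟨i, hi, h1⟩ := (Ideal.mem_map_iff_of_surjective _ P.ringCon.mk'_surjective).1
      ((eq_top_of_isCompl_bot hC).symm ▸ Submodule.mem_top)
    have : 1 - i ∈ P := ringCon_mk'_eq_zero_iff.1 (by rw [map_sub, map_one, h1, sub_self])
    exact hI (I.eq_top (by simpa using I.add_mem (hPI.le this) hi))
  obtain ⟨c', hc'C, hc'0⟩ := (Submodule.ne_bot_iff C).1 hC0
  obtain ⟨c, rfl⟩ := P.ringCon.mk'_surjective c'
  -- each `a * r * c` maps into both the image of `I` and its complement `C`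
  have hac : ∀ r, a * r * c ∈ P := fun r => ringCon_mk'_eq_zero_iff.1 <|
    Submodule.disjoint_def.1 hC.disjoint _
      (Ideal.mem_map_of_mem _ (I.mul_mem_right _ _ (I.mul_mem_right _ _ haI)))
      (by rw [map_mul]; exact C.smul_mem _ hc'C)
  exact (hP.mem_or_mem hac).elim haP fun hc => hc'0 (ringCon_mk'_eq_zero_iff.2 hc)

end TwoSidedIdeal

theorem IsPrimeRing.eq_zero_or_eq_zero_of_forall_mul_mul_eq_zero {R : Type u} [Ring R]
    (h : IsPrimeRing R) {a b : R} (hab : ∀ r, a * r * b = 0) : a = 0 ∨ b = 0 := by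
  simpa using TwoSidedIdeal.mem_or_mem_of_forall_mul_mul_mem (P := ⊥)
    (fun I J hIJ => by simpa using h I J (by simpa using hIJ)) (by simpa using hab)

namespace IsRightPerfectRing

variable {S : Type u} [Ring S]

theorem wellFounded_span_singleton (hS : IsRightPerfectRing S) :
    WellFounded fun x y : S => span S {x} < span S {y} := by
  rw [wellFounded_iff_isEmpty_descending_chain]
  refine ⟨fun ⟨f, hf⟩ => ?_⟩
  obtain ⟨n, hn⟩ := hS f fun k => (hf k).le
  exact (hf n).ne (hn (n + 1) n.le_succ)

theorem isSemilocalRing (hS : IsRightPerfectRing S) : IsSemilocalRing S :=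
  .of_wellFounded_span_singleton
    (wellFounded_span_singleton_of_surjective (mkQ_surjective _) hS.wellFounded_span_singleton)
    (by rw [Ideal.jacobson_bot]; exact Module.jacobson_quotient_jacobson S S)


theorem jacobson_eq_bot_of_isPrimeRing (hS : IsRightPerfectRing S) (hp : IsPrimeRing S) :
    Ring.jacobson S = ⊥ := by
  by_contra hJ
  obtain ⟨c, ⟨hcJ, hc0⟩, hmin⟩ := hS.wellFounded_span_singleton.has_min
    {c | c ∈ Ring.jacobson S ∧ c ≠ 0} ((Submodule.ne_bot_iff _).1 hJ)
  obtain ⟨a, haJ, hac⟩ : ∃ a ∈ Ring.jacobson S, a * c ≠ 0 := by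
    by_contra! h
    exact hc0 ((hp.eq_zero_or_eq_zero_of_forall_mul_mul_eq_zero fun r =>
      h _ (Ideal.mul_mem_right _ _ hcJ)).elim id id)
  have hc : c ∈ span S {a * c} := by
    by_contra h
    exact hmin (a * c) ⟨Ideal.mul_mem_left _ a hcJ, hac⟩
      (lt_of_le_not_ge (span_singleton_smul_le S a c) fun hle =>
        h (hle (mem_span_singleton_self c)))
  -- `c = u * a * c`, while `1 - u * a` is left invertible because `u * a ∈ J`
  obtain ⟨u, hu⟩ := mem_span_singleton.1 hc
  obtain ⟨v, hv⟩ := Ideal.exists_mul_sub_mem_of_sub_one_mem_jacobson (1 - u * a) <| by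
    rw [Ideal.jacobson_bot, sub_sub_cancel_left]
    exact neg_mem (Ideal.mul_mem_left _ u haJ)
  rw [Submodule.mem_bot, sub_eq_zero] at hv
  apply hc0
  calc c = v * (1 - u * a) * c := by rw [hv, one_mul]
    _ = v * (c - u * (a * c)) := by noncomm_ring
    _ = 0 := by rw [← smul_eq_mul u, hu, sub_self, mul_zero]

theorem isSemisimpleRing_of_isPrimeRing (hS : IsRightPerfectRing S) (hp : IsPrimeRing S) :
    IsSemisimpleRing S :=
  .of_wellFounded_span_singleton hS.wellFounded_span_singleton
    (hS.jacobson_eq_bot_of_isPrimeRing hp)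

end IsRightPerfectRing

theorem stmt3_general {R : Type u} [Ring R]
    (h2 : IsRightAlmostPerfectRing R) : IsHLocalRing R := by
  refine ⟨fun I hI hI' => (h2 I hI hI').isSemilocalRing, fun P hP hPprime => ?_⟩
  have : IsSemisimpleRing P.ringCon.Quotient :=
    (h2 P hP hPprime.1).isSemisimpleRing_of_isPrimeRing hPprime.isPrimeRing_quotient
  have hPmax := hPprime.isCoatom_of_isSemisimpleRing
  exact ⟨P, ⟨hPmax, le_rfl⟩, fun M hM => (hPmax.le_iff.1 hM.2).resolve_left hM.1.1⟩

/-- If `R` is a prime right almost perfect ring, then `R` is h-local. -/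
theorem stmt3 {R : Type u} [Ring R] (h1 : IsPrimeRing R)
    (h2 : IsRightAlmostPerfectRing R) : IsHLocalRing R :=
  stmt3_general h2
end

section
/- For any ring R, the following conditions are equivalent: (1) every non-faithful left R-module is semiartinian; (2) every non-faithful left R-module is an essential extension of its socle; (3) every nonzero non-faithful left R-module contains a simple submodule; (4) R/I is a left semiartinian ring for every nonzero two-sided ideal I of R; (5) for every proper left ideal L of R with nonzero core, the cyclic left R-module R/L contains a simple submodule. -/
/-!
Everything is reduced to (3). Non-faithfulness passes to quotients and submodules, which gives
(1) ⇔ (3) and (2) ⇔ (3): the socle of `M` meets `P` as soon as `P` has a simple submodule.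
A nonzero cyclic submodule `R ∙ m` of a non-faithful module is `R ⧸ torsionOf m`, and the core of
`torsionOf m` contains the annihilator, which gives (5) ⇒ (3). Finally, modules over `R ⧸ I` are the
`R`-modules killed by `I`, with the same submodules, and a non-faithful module is killed by its
annihilator, a nonzero two-sided ideal; this gives (3) ⇔ (4).
-/

universe u

/-- A module is *semiartinian* if every nonzero quotient contains a simple submodule. -/
def IsSemiartinianModule (R : Type u) (M : Type u) [Ring R] [AddCommGroup M]
    [Module R M] : Prop :=
  ∀ N : Submodule R M, N ≠ ⊤ → ∃ S : Submodule R (M ⧸ N), IsSimpleModule R S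

/-- The *socle* of a module: the sum of all its simple submodules. -/
def moduleSocle (R : Type u) (M : Type u) [Ring R] [AddCommGroup M] [Module R M] :
    Submodule R M :=
  sSup {S : Submodule R M | IsSimpleModule R S}

/-- A ring is *left semiartinian* if every nonzero left module contains a simple
submodule. -/
def IsLeftSemiartinianRing (A : Type u) [Ring A] : Prop :=
  ∀ (M : Type u) (_ : AddCommGroup M) (_ : Module A M), Nontrivial M →
    ∃ S : Submodule A M, IsSimpleModule A S

open Submodule

section

variable {R : Type*} [Ring R]

theorem exists_isSimpleModule_of_injective {M N : Type*} [AddCommGroup M] [AddCommGroup N]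
    [Module R M] [Module R N] (f : M →ₗ[R] N) (hf : Function.Injective f)
    (h : ∃ S : Submodule R M, IsSimpleModule R S) : ∃ S : Submodule R N, IsSimpleModule R S :=
  let ⟨S, _⟩ := h; ⟨S.map f, .congr (equivMapOfInjective f hf S).symm⟩

theorem exists_isSimpleModule_iff_of_ringHom_surjective {A M : Type*} [Ring A] [AddCommGroup M]
    [Module R M] [Module A M] (f : R →+* A) (hf : Function.Surjective f)
    (hsmul : ∀ (r : R) (m : M), f r • m = r • m) :
    (∃ S : Submodule R M, IsSimpleModule R S) ↔ ∃ S : Submodule A M, IsSimpleModule A S := by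
  have : RingHomSurjective f := ⟨hf⟩
  let e : Submodule R M ≃o Submodule A M := orderIsoMapComapOfBijective
    { toFun := id, map_add' := fun _ _ => rfl, map_smul' := fun r m => (hsmul r m).symm }
    Function.bijective_id
  simp_rw [isSimpleModule_iff_isAtom]
  exact (exists_congr fun S => (e.isAtom_iff S).symm).trans e.surjective.exists.symm

theorem exists_isSimpleModule_of_cyclic
    (h : ∀ L : Ideal R, L ≠ ⊤ → (∃ r : R, r ≠ 0 ∧ ∀ x : R, r * x ∈ L) →
      ∃ S : Submodule R (R ⧸ L), IsSimpleModule R S)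
    {M : Type*} [AddCommGroup M] [Module R M] [Nontrivial M]
    (hM : ∃ r : R, r ≠ 0 ∧ ∀ m : M, r • m = 0) : ∃ S : Submodule R M, IsSimpleModule R S := by
  obtain ⟨m, hm⟩ := exists_ne (0 : M)
  obtain ⟨r, hr, hrM⟩ := hM
  have hL : Ideal.torsionOf R M m ≠ ⊤ := (Ideal.torsionOf_eq_top_iff R m).not.mpr hm
  have hcore : ∀ x : R, r * x ∈ Ideal.torsionOf R M m := fun x => by
    rw [Ideal.mem_torsionOf_iff, mul_smul, hrM]
  exact exists_isSimpleModule_of_injective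
    ((R ∙ m).subtype ∘ₗ (Ideal.quotTorsionOfEquivSpanSingleton R M m).toLinearMap)
    ((R ∙ m).injective_subtype.comp (LinearEquiv.injective _)) (h _ hL ⟨r, hr, hcore⟩)

end

theorem TwoSidedIdeal.exists_mem_ne_zero_of_ne_bot {R : Type*} [NonUnitalNonAssocRing R]
    {I : TwoSidedIdeal R} (hI : I ≠ ⊥) : ∃ r ∈ I, r ≠ 0 := by
  by_contra! h
  exact hI (eq_bot_iff.2 fun x hx => (mem_bot R).2 (h x hx))

section

variable {R : Type u} [Ring R]

section

variable {M : Type u} [AddCommGroup M] [Module R M]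

theorem IsSemiartinianModule.exists_isSimpleModule [Nontrivial M]
    (h : IsSemiartinianModule R M) : ∃ S : Submodule R M, IsSimpleModule R S :=
  exists_isSimpleModule_of_injective _ (quotEquivOfEqBot ⊥ rfl).injective (h ⊥ bot_ne_top)

theorem moduleSocle_inf_ne_bot {P : Submodule R M} (h : ∃ S : Submodule R P, IsSimpleModule R S) :
    moduleSocle R M ⊓ P ≠ ⊥ := by
  obtain ⟨S, _⟩ := h
  have hS : IsSimpleModule R (S.map P.subtype) :=
    .congr (equivMapOfInjective P.subtype P.injective_subtype S).symm
  refine ne_bot_of_le_ne_bot (isSimpleModule_iff_isAtom.mp hS).1 ?_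
  exact le_inf (le_sSup hS) (map_subtype_le P S)

theorem exists_isSimpleModule_of_moduleSocle_ne_bot (h : moduleSocle R M ≠ ⊥) :
    ∃ S : Submodule R M, IsSimpleModule R S := by
  by_contra! hc
  exact h (sSup_eq_bot.mpr fun S hS => (hc S hS).elim)

end

theorem exists_isSimpleModule_of_smul_eq_zero (I : TwoSidedIdeal R)
    (hR : IsLeftSemiartinianRing I.ringCon.Quotient) {M : Type u} [AddCommGroup M] [Module R M]
    [Nontrivial M] (hI : ∀ r ∈ I, ∀ m : M, r • m = 0) : ∃ S : Submodule R M, IsSimpleModule R S := by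
  let act : I.ringCon.Quotient →+* AddMonoid.End M :=
    I.ringCon.lift (Module.toAddMonoidEnd R M) fun x y hxy => AddMonoidHom.ext fun m =>
      sub_eq_zero.mp <| by simpa [sub_smul] using hI _ ((I.rel_iff x y).mp hxy) m
  let _ : Module I.ringCon.Quotient M := Module.compHom M act
  exact (exists_isSimpleModule_iff_of_ringHom_surjective I.ringCon.mk' Quotient.mk''_surjective
    fun _ _ => rfl).mpr (hR M _ _ ‹_›)

theorem isLeftSemiartinianRing_quotient_of_nonfaithful
    (h : ∀ (M : Type u) (_ : AddCommGroup M) (_ : Module R M),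
      (∃ r : R, r ≠ 0 ∧ ∀ m : M, r • m = 0) → Nontrivial M →
        ∃ S : Submodule R M, IsSimpleModule R S)
    (I : TwoSidedIdeal R) (hI : I ≠ ⊥) : IsLeftSemiartinianRing I.ringCon.Quotient := by
  intro M _ _ _
  let _ : Module R M := Module.compHom M I.ringCon.mk'
  obtain ⟨r, hrI, hr⟩ := TwoSidedIdeal.exists_mem_ne_zero_of_ne_bot hI
  have hrM : ∀ m : M, r • m = 0 := fun m => by
    show I.ringCon.mk' r • m = 0
    rw [show I.ringCon.mk' r = 0 from (RingCon.eq _).mpr hrI, zero_smul]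
  exact (exists_isSimpleModule_iff_of_ringHom_surjective I.ringCon.mk' Quotient.mk''_surjective
    fun _ _ => rfl).mp (h M _ _ ⟨r, hr, hrM⟩ ‹_›)

theorem exists_isSimpleModule_of_isLeftSemiartinianRing_quotients
    (h : ∀ I : TwoSidedIdeal R, I ≠ ⊥ → IsLeftSemiartinianRing I.ringCon.Quotient)
    {M : Type u} [AddCommGroup M] [Module R M] [Nontrivial M]
    (hM : ∃ r : R, r ≠ 0 ∧ ∀ m : M, r • m = 0) : ∃ S : Submodule R M, IsSimpleModule R S := by
  obtain ⟨r, hr, hrM⟩ := hM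
  let I := TwoSidedIdeal.ker (Module.toAddMonoidEnd R M)
  have mem_I : ∀ s, s ∈ I ↔ ∀ m : M, s • m = 0 := fun s =>
    TwoSidedIdeal.mem_ker _ |>.trans AddMonoidHom.ext_iff
  have hI : I ≠ ⊥ := fun hI => hr <| (TwoSidedIdeal.mem_bot R).1 (hI ▸ (mem_I r).2 hrM)
  exact exists_isSimpleModule_of_smul_eq_zero I (h I hI) fun s => (mem_I s).1

end

/-- The equivalent conditions on non-faithful left modules over an arbitrary ring:
(1) every non-faithful left module is semiartinian;
(2) every non-faithful left module is an essential extension of its socle;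
(3) every nonzero non-faithful left module contains a simple submodule;
(4) `R/I` is left semiartinian for every nonzero two-sided ideal `I`;
(5) for every proper left ideal `L` with nonzero core, `R/L` contains a simple
submodule. -/
theorem stmt5 (R : Type u) [Ring R] :
    [ (∀ (M : Type u) (_ : AddCommGroup M) (_ : Module R M),
        (∃ r : R, r ≠ 0 ∧ ∀ m : M, r • m = 0) → IsSemiartinianModule R M),
      (∀ (M : Type u) (_ : AddCommGroup M) (_ : Module R M),
        (∃ r : R, r ≠ 0 ∧ ∀ m : M, r • m = 0) →
          ∀ P : Submodule R M, P ≠ ⊥ → moduleSocle R M ⊓ P ≠ ⊥),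
      (∀ (M : Type u) (_ : AddCommGroup M) (_ : Module R M),
        (∃ r : R, r ≠ 0 ∧ ∀ m : M, r • m = 0) → Nontrivial M →
          ∃ S : Submodule R M, IsSimpleModule R S),
      (∀ I : TwoSidedIdeal R, I ≠ ⊥ → IsLeftSemiartinianRing I.ringCon.Quotient),
      (∀ L : Ideal R, L ≠ ⊤ → (∃ r : R, r ≠ 0 ∧ ∀ x : R, r * x ∈ L) →
          ∃ S : Submodule R (R ⧸ L), IsSimpleModule R S) ].TFAE := by
  tfae_have 1 → 3 := fun h M _ _ hM _ => (h M _ _ hM).exists_isSimpleModule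
  tfae_have 3 → 1 := fun h M _ _ ⟨r, hr, hrM⟩ N hN =>
    have : Nontrivial (M ⧸ N) := Submodule.Quotient.nontrivial_iff.mpr hN
    h _ _ _ ⟨r, hr, fun m => Quotient.inductionOn' m fun m => congrArg N.mkQ (hrM m)⟩ this
  tfae_have 2 → 3 := fun h M _ _ hM _ =>
    exists_isSimpleModule_of_moduleSocle_ne_bot (by simpa using h M _ _ hM ⊤ top_ne_bot)
  tfae_have 3 → 2 := fun h M _ _ ⟨r, hr, hrM⟩ P hP =>
    have : Nontrivial P := nontrivial_iff_ne_bot.mpr hP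
    moduleSocle_inf_ne_bot (h P _ _ ⟨r, hr, fun p => Subtype.ext (hrM p)⟩ this)
  tfae_have 3 → 5 := fun h L hL ⟨r, hr, hrL⟩ =>
    have : Nontrivial (R ⧸ L) := Submodule.Quotient.nontrivial_iff.mpr hL
    h _ _ _ ⟨r, hr, fun x => Quotient.inductionOn' x fun x => (Quotient.mk_eq_zero L).mpr (hrL x)⟩
      this
  tfae_have 5 → 3 := fun h M _ _ hM _ => exists_isSimpleModule_of_cyclic h hM
  tfae_have 3 → 4 := isLeftSemiartinianRing_quotient_of_nonfaithful
  tfae_have 4 → 3 := fun h M _ _ hM _ =>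
    exists_isSimpleModule_of_isLeftSemiartinianRing_quotients h hM
  tfae_finish
end

section
/- A local ring R is right almost perfect if and only if every nonzero non-faithful left R-module contains a simple submodule. -/
/-!
Let `J` be the set of nonunits of the local ring `R`. A module has a simple submodule iff some
nonzero element is killed by `J`; and `x = c a x` with `a ∈ J` forces `x = 0`, as `1 - c a` is a
unit.

(⇒) Let `I ≠ 0` be the annihilator of `M` and suppose `J` kills no nonzero element: then there
are `aₙ ∈ J` with `xₙ₊₁ = aₙ xₙ ≠ 0`. With `pₙ = aₙ₋₁ ⋯ a₀`, the principal left ideals of `R/I`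
generated by the `pₙ` descend, so they stabilise: `p_N ≡ c a_N p_N` modulo `I`. Applied to `x₀`
this reads `x_N = c a_N x_N`, so `x_N = 0`.

(⇐) In `Q = R/I`, a chain of principal left ideals that never stabilises yields nonunits `dₖ`
none of whose products `dₖ ⋯ d₀` vanishes. The character module of the direct limit of
`Q → Q → ⋯`, with transition maps `s ↦ dₖ s`, is then a nonzero `R`-module annihilated by `I` in
which `J` kills no nonzero element (Bass).
-/

universe u

namespace IsDedekindFiniteMonoid

variable {M : Type*} [Monoid M] [IsDedekindFiniteMonoid M] {a : M}

theorem mul_mem_nonunits_left (ha : a ∈ nonunits M) (b : M) : a * b ∈ nonunits M :=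
  fun h => ha (isUnit_of_mul_isUnit_left h)

theorem mul_mem_nonunits_right (ha : a ∈ nonunits M) (b : M) : b * a ∈ nonunits M :=
  fun h => ha (isUnit_of_mul_isUnit_right h)

end IsDedekindFiniteMonoid

theorem isSimpleModule_span_singleton_of_nonunits_smul_eq_zero {R M : Type*} [Ring R]
    [AddCommGroup M] [Module R M] {x : M} (hx : x ≠ 0) (hJ : ∀ u ∈ nonunits R, u • x = 0) :
    IsSimpleModule R (R ∙ x) := by
  rw [isSimpleModule_iff_isAtom]
  refine ⟨by simpa using hx, fun N hN => ?_⟩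
  by_contra hN0
  obtain ⟨y, hyN, hy0⟩ := Submodule.exists_mem_ne_zero_of_ne_bot hN0
  obtain ⟨r, rfl⟩ := Submodule.mem_span_singleton.mp (hN.le hyN)
  have hr : IsUnit r := not_not.mp fun hr => hy0 (hJ r hr)
  exact hN.not_ge <|
    (Submodule.span_singleton_le_iff_mem _ _).mpr ((N.smul_mem_iff_of_isUnit hr).mp hyN)

namespace IsLocalRing

variable {R : Type*} [Ring R] [IsLocalRing R]

-- `b * a` is idempotent, and the only idempotents of a local ring are `0` and `1`.
instance : IsDedekindFiniteMonoid R where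
  mul_eq_one_symm {a b} hab := by
    have he : IsIdempotentElem (b * a) := by
      rw [IsIdempotentElem, mul_assoc, ← mul_assoc a, hab, one_mul]
    rcases isUnit_or_isUnit_of_add_one (add_sub_cancel (b * a) 1) with h | h
    · exact (IsIdempotentElem.iff_eq_one_of_isUnit h).mp he
    · have hb : (1 - b * a) * b = 0 := by
        rw [sub_mul, one_mul, mul_assoc, hab, mul_one, sub_self]
      rw [h.mul_right_eq_zero] at hb
      simp [hb] at hab

variable {M : Type*} [AddCommGroup M] [Module R M]

theorem eq_zero_of_smul_eq_self {u : R} (hu : u ∈ nonunits R) {x : M} (h : u • x = x) :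
    x = 0 := by
  have hunit : IsUnit (1 - u) :=
    (isUnit_or_isUnit_of_add_one (add_sub_cancel u 1)).resolve_left hu
  rw [← hunit.smul_eq_zero, sub_smul, one_smul, h, sub_self]

theorem smul_eq_zero_of_isSimpleModule [IsSimpleModule R M] (x : M) {u : R}
    (hu : u ∈ nonunits R) : u • x = 0 := by
  by_contra hux
  have hx : x ∈ R ∙ (u • x) := by
    rw [(IsSimpleOrder.eq_bot_or_eq_top (R ∙ (u • x))).resolve_left (by simpa using hux)]
    trivial
  obtain ⟨r, hr⟩ := Submodule.mem_span_singleton.mp hx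
  rw [← mul_smul] at hr
  have hru := IsDedekindFiniteMonoid.mul_mem_nonunits_right hu r
  exact hux (by rw [eq_zero_of_smul_eq_self hru hr, smul_zero])

theorem exists_isSimpleModule_submodule_iff :
    (∃ S : Submodule R M, IsSimpleModule R S) ↔
      ∃ x : M, x ≠ 0 ∧ ∀ u ∈ nonunits R, u • x = 0 := by
  constructor
  · rintro ⟨S, hS⟩
    have := IsSimpleModule.nontrivial R S
    obtain ⟨x, hx⟩ := exists_ne (0 : S)
    exact ⟨x, by simpa using hx, fun u hu =>
      congrArg Subtype.val (smul_eq_zero_of_isSimpleModule x hu)⟩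
  · rintro ⟨x, hx, hJ⟩
    exact ⟨R ∙ x, isSimpleModule_span_singleton_of_nonunits_smul_eq_zero hx hJ⟩

end IsLocalRing

section DescProd

variable {M : Type*} [Monoid M]

def descProd (a : ℕ → M) : ℕ → M
  | 0 => 1
  | n + 1 => a n * descProd a n

@[simp] theorem descProd_zero (a : ℕ → M) : descProd a 0 = 1 := rfl

@[simp] theorem descProd_one (a : ℕ → M) : descProd a 1 = a 0 := mul_one _

theorem descProd_succ (a : ℕ → M) (n : ℕ) : descProd a (n + 1) = a n * descProd a n := rfl

theorem descProd_add (a : ℕ → M) (m n : ℕ) :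
    descProd a (m + n) = descProd (fun k => a (m + k)) n * descProd a m := by
  induction n with
  | zero => simp
  | succ n ih => rw [← add_assoc, descProd_succ, ih, descProd_succ, mul_assoc]

theorem map_descProd {N F : Type*} [Monoid N] [FunLike F M N] [MonoidHomClass F M N] (f : F)
    (a : ℕ → M) (n : ℕ) : f (descProd a n) = descProd (fun k => f (a k)) n := by
  induction n with
  | zero => simp
  | succ n ih => rw [descProd_succ, map_mul, ih, descProd_succ]

end DescProd

theorem IsRightPerfectRing.exists_descProd_eq_mul {S : Type u} [Ring S]
    (hS : IsRightPerfectRing S) (d : ℕ → S) : ∃ N c, descProd d N = c * d N * descProd d N := by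
  obtain ⟨N, hN⟩ := hS (descProd d) fun n => (Ideal.span_singleton_le_iff_mem _).mpr <|
    Ideal.mem_span_singleton'.mpr ⟨d n, rfl⟩
  obtain ⟨c, hc⟩ := Ideal.mem_span_singleton'.mp <|
    (hN (N + 1) N.le_succ).symm ▸ Ideal.mem_span_singleton_self (descProd d N)
  exact ⟨N, c, by rw [mul_assoc, ← descProd_succ, hc]⟩

theorem isRightPerfectRing_of_descProd_eq_zero {S : Type u} [Ring S]
    (h : ∀ d : ℕ → S, (∀ n, d n ∈ nonunits S) → ∃ n, descProd d n = 0) :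
    IsRightPerfectRing S := by
  intro f hf
  by_contra! hcon
  have hmono : Antitone fun n => Ideal.span {f n} := antitone_nat_of_succ_le hf
  choose g hg using hcon
  set idx : ℕ → ℕ := fun k => g^[k] 0
  have hidx (k : ℕ) : idx (k + 1) = g (idx k) := Function.iterate_succ_apply' g k 0
  choose d hd using fun k => Ideal.mem_span_singleton'.mp <|
    hmono (hg (idx k)).1 (Ideal.mem_span_singleton_self (f (g (idx k))))
  have hd_nonunit (k : ℕ) : d k ∈ nonunits S := by
    intro hu
    refine (hg (idx k)).2 (le_antisymm (hmono (hg (idx k)).1) ?_)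
    rw [Ideal.span_singleton_le_iff_mem, ← hd k]
    exact Ideal.mem_span_singleton'.mpr ⟨↑hu.unit⁻¹, by rw [← mul_assoc, hu.val_inv_mul, one_mul]⟩
  have hf_idx (k : ℕ) : f (idx k) = descProd d k * f (idx 0) := by
    induction k with
    | zero => simp
    | succ k ih => rw [hidx, ← hd k, ih, descProd_succ, mul_assoc]
  obtain ⟨K, hK⟩ := h d hd_nonunit
  have hzero : f (idx K) = 0 := by rw [hf_idx, hK, zero_mul]
  obtain ⟨hle, hne⟩ := hg (idx K)
  refine hne (le_antisymm (hmono hle) ?_)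
  rw [hzero, Ideal.span_singleton_eq_bot.mpr rfl]
  exact bot_le

-- `(q • ψ) n = ψ (n q)`, through the action of `(Qᵐᵒᵖ)ᵈᵐᵃ`, which is `Q` up to `opOp`.
abbrev characterLeftModule (Q N : Type*) [Ring Q] [AddCommGroup N] [Module Qᵐᵒᵖ N] :
    Module Q (N →+ AddCircle (1 : ℚ)) :=
  Module.compHom _ (show Q →+* (Qᵐᵒᵖ)ᵈᵐᵃ from (RingEquiv.opOp Q).toRingHom)

section MulLeftSystem

variable {Q : Type*} [Ring Q] (b : ℕ → Q)

def mulLeftSystem (i j : ℕ) (_ : i ≤ j) : Q →ₗ[Qᵐᵒᵖ] Q :=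
  DistribSMul.toLinearMap Qᵐᵒᵖ Q (descProd (fun k => b (i + k)) (j - i))

theorem mulLeftSystem_apply (i j : ℕ) (h : i ≤ j) (s : Q) :
    mulLeftSystem b i j h s = descProd (fun k => b (i + k)) (j - i) * s := rfl

instance : DirectedSystem (fun _ : ℕ => Q) fun i j h => mulLeftSystem b i j h where
  map_self i s := by simp [mulLeftSystem_apply]
  map_map {k j i} hij hjk s := by
    have hprod := descProd_add (fun l => b (i + l)) (j - i) (k - j)
    rw [show j - i + (k - j) = k - i by omega] at hprod
    simp only [← add_assoc, Nat.add_sub_cancel' hij] at hprod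
    rw [mulLeftSystem_apply, mulLeftSystem_apply, mulLeftSystem_apply, ← mul_assoc, ← hprod]

end MulLeftSystem

theorem exists_descProd_eq_zero_of_socle {Q : Type u} [Ring Q] (J : Set Q)
    (hsoc : ∀ (M : Type u) [AddCommGroup M] [Module Q M], Nontrivial M →
      ∃ x : M, x ≠ 0 ∧ ∀ v ∈ J, v • x = 0)
    (b : ℕ → Q) (hb : ∀ n s, b n * s ∈ J) : ∃ n, descProd b n = 0 := by
  by_contra! hne
  let L := Module.DirectLimit (fun _ : ℕ => Q) (mulLeftSystem b)
  let ι : ∀ i, Q →ₗ[Qᵐᵒᵖ] L := Module.DirectLimit.of Qᵐᵒᵖ ℕ _ (mulLeftSystem b)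
  let _ := characterLeftModule Q L
  have hι : ι 0 1 ≠ 0 := fun h => by
    obtain ⟨j, _, hj⟩ := Module.DirectLimit.of.zero_exact h
    exact hne j (by simpa [mulLeftSystem_apply] using hj)
  obtain ⟨ψ, hψ⟩ := CharacterModule.exists_character_apply_ne_zero_of_ne_zero hι
  have : Nontrivial (L →+ AddCircle (1 : ℚ)) := ⟨ψ, 0, fun h => hψ (by rw [h]; rfl)⟩
  obtain ⟨x, hx0, hxJ⟩ := hsoc _ this
  refine hx0 (AddMonoidHom.ext fun l => Module.DirectLimit.induction_on l fun i s => ?_)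
  calc x (ι i s) = x (ι (i + 1) (b i * s)) := by
        rw [← Module.DirectLimit.of_f (hij := i.le_succ)]
        simp [ι, mulLeftSystem_apply]
    _ = x (MulOpposite.op (b i * s) • ι (i + 1) 1) := by
        rw [← map_smul, op_smul_eq_mul, one_mul]
    _ = ((b i * s) • x) (ι (i + 1) 1) := rfl
    _ = 0 := by rw [hxJ _ (hb i s)]; rfl

namespace IsLocalRing

theorem exists_nonunits_smul_eq_zero_of_isRightPerfectRing {R : Type*} [Ring R]
    [IsLocalRing R] {Q : Type u} [Ring Q] (hQ : IsRightPerfectRing Q) (π : R →+* Q)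
    (hπ : Function.Surjective π) {M : Type*} [AddCommGroup M] [Module R M] [Nontrivial M]
    (hker : ∀ r, π r = 0 → ∀ m : M, r • m = 0) :
    ∃ x : M, x ≠ 0 ∧ ∀ u ∈ nonunits R, u • x = 0 := by
  by_contra! h
  choose! g hg using h
  obtain ⟨x₀, hx₀⟩ := exists_ne (0 : M)
  set xs : ℕ → M := fun n => (fun x => g x • x)^[n] x₀
  have hxs_succ (n : ℕ) : xs (n + 1) = g (xs n) • xs n := Function.iterate_succ_apply' _ _ _
  have hxs_ne (n : ℕ) : xs n ≠ 0 := by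
    induction n with
    | zero => exact hx₀
    | succ n ih => rw [hxs_succ]; exact (hg _ ih).2
  set a : ℕ → R := fun n => g (xs n)
  have hxs (n : ℕ) : xs n = descProd a n • x₀ := by
    induction n with
    | zero => simp [xs]
    | succ n ih => rw [hxs_succ, descProd_succ, mul_smul, ← ih]
  obtain ⟨N, c, hc⟩ := hQ.exists_descProd_eq_mul fun n => π (a n)
  obtain ⟨c, rfl⟩ := hπ c
  rw [← map_descProd, ← map_mul, ← map_mul] at hc
  have hfix : (c * a N) • xs N = xs N := by
    have h0 := hker (c * a N * descProd a N - descProd a N) (by rw [map_sub, ← hc, sub_self]) x₀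
    rw [sub_smul, sub_eq_zero] at h0
    rw [hxs, ← mul_smul, h0]
  exact hxs_ne N <| eq_zero_of_smul_eq_self
    (IsDedekindFiniteMonoid.mul_mem_nonunits_right (hg _ (hxs_ne N)).1 c) hfix

theorem exists_isSimpleModule_of_isRightAlmostPerfectRing {R : Type u} [Ring R]
    [IsLocalRing R] (hR : IsRightAlmostPerfectRing R) {M : Type*} [AddCommGroup M] [Module R M]
    [Nontrivial M] {r : R} (hr : r ≠ 0) (hrM : ∀ m : M, r • m = 0) :
    ∃ S : Submodule R M, IsSimpleModule R S := by
  let I := TwoSidedIdeal.ker (Module.toAddMonoidEnd R M)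
  have hmem (s : R) : s ∈ I ↔ ∀ m : M, s • m = 0 := by
    rw [TwoSidedIdeal.mem_ker, DFunLike.ext_iff]; rfl
  have hI0 : I ≠ ⊥ := fun h => hr ((TwoSidedIdeal.mem_bot R).mp (h ▸ (hmem r).mpr hrM))
  have hItop : I ≠ ⊤ := fun h => by
    obtain ⟨m, hm⟩ := exists_ne (0 : M)
    exact hm (by simpa using (hmem 1).mp (h ▸ TwoSidedIdeal.mem_top R) m)
  refine exists_isSimpleModule_submodule_iff.mpr <|
    exists_nonunits_smul_eq_zero_of_isRightPerfectRing (hR I hI0 hItop) I.ringCon.mk'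
      I.ringCon.mk'_surjective fun s hs => (hmem s).mp ?_
  rwa [← TwoSidedIdeal.mem_ker, TwoSidedIdeal.ker_ringCon_mk'] at hs

theorem isRightPerfectRing_quotient_of_exists_isSimpleModule {R : Type u} [Ring R] [IsLocalRing R]
    (H : ∀ (M : Type u) (_ : AddCommGroup M) (_ : Module R M),
      (∃ r : R, r ≠ 0 ∧ ∀ m : M, r • m = 0) → Nontrivial M →
        ∃ S : Submodule R M, IsSimpleModule R S)
    {I : TwoSidedIdeal R} (hI : I ≠ ⊥) : IsRightPerfectRing I.ringCon.Quotient := by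
  obtain ⟨r₀, hr₀I, hr₀⟩ := SetLike.exists_of_lt (bot_lt_iff_ne_bot.mpr hI)
  let π := I.ringCon.mk'
  have hπr₀ : π r₀ = 0 := by rwa [← TwoSidedIdeal.mem_ker, TwoSidedIdeal.ker_ringCon_mk']
  refine isRightPerfectRing_of_descProd_eq_zero fun d hd =>
    exists_descProd_eq_zero_of_socle (π '' nonunits R) ?_ d ?_
  · intro M _ _ _
    let _ := Module.compHom M π
    have hr₀M (m : M) : r₀ • m = 0 := show π r₀ • m = 0 by rw [hπr₀, zero_smul]
    obtain ⟨x, hx, hxJ⟩ := exists_isSimpleModule_submodule_iff.mp <|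
      H M _ _ ⟨r₀, fun h => hr₀ ((TwoSidedIdeal.mem_bot R).mpr h), hr₀M⟩ ‹_›
    exact ⟨x, hx, by rintro _ ⟨u, hu, rfl⟩; exact hxJ u hu⟩
  · intro n s
    obtain ⟨a, ha⟩ := I.ringCon.mk'_surjective (d n)
    obtain ⟨t, rfl⟩ := I.ringCon.mk'_surjective s
    have ha_nonunit : a ∈ nonunits R := fun h => hd n (ha ▸ h.map π)
    exact ⟨a * t, IsDedekindFiniteMonoid.mul_mem_nonunits_left ha_nonunit t, by rw [map_mul, ha]⟩

end IsLocalRing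

/-- A local ring is right almost perfect iff every nonzero non-faithful left
module contains a simple submodule. -/
theorem stmt8 {R : Type u} [Ring R] (hR : IsLocalRing R) :
    IsRightAlmostPerfectRing R ↔
      (∀ (M : Type u) (_ : AddCommGroup M) (_ : Module R M),
        (∃ r : R, r ≠ 0 ∧ ∀ m : M, r • m = 0) → Nontrivial M →
          ∃ S : Submodule R M, IsSimpleModule R S) :=
  ⟨fun hAP _ _ _ ⟨_, hr, hrM⟩ _ => hR.exists_isSimpleModule_of_isRightAlmostPerfectRing hAP hr hrM,
    fun H _ hI _ => hR.isRightPerfectRing_quotient_of_exists_isSimpleModule H hI⟩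
end

section
/- Every right noetherian right perfect ring is right artinian. -/
universe u

/-!
We show that `S = Rᵐᵒᵖ`, a left noetherian ring with the descending chain condition on principal
right ideals, is semiprimary; the Hopkins–Levitzki theorem then turns noetherian into artinian.

The chain condition makes the Jacobson radical `J` T-nilpotent: if `y * S` is minimal in a
family of principal right ideals and `y * j * S` belongs to it for some `j ∈ J`, then
`y = y * j * s` with `1 - j * s` a unit, so `y = 0`. Together with the stabilization of the left
annihilators of the powers `J ^ n` this forces `J` to be nilpotent.

The quotient `S ⧸ J` is semiprime and inherits the chain condition. There every nonzero principal
right ideal contains a minimal one, generated by an idempotent `e` (Brauer), and then `e * S * e`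
is a division ring, so `S * e` is a simple left ideal. An idempotent `e` of the left socle with
`(1 - e) * S` minimal can be enlarged by an orthogonal idempotent unless `e = 1`, so the socle is
everything.
-/

/-- The descending chain condition on principal right ideals (the mirror image of
`IsRightPerfectRing`), as well-foundedness of strict inclusion; note that
`a * A ⊆ b * A ↔ b ∣ a`. -/
def IsLeftPerfectRing (A : Type*) [Ring A] : Prop :=
  WellFounded fun a b : A => b ∣ a ∧ ¬a ∣ b

/-- Equivalent to the absence of nonzero nilpotent two-sided ideals. -/
def IsSemiprimeRing (A : Type*) [Ring A] : Prop :=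
  ∀ a : A, (∀ s, a * s * a = 0) → a = 0

section Jacobson

variable {A : Type*} [Ring A]

theorem isUnit_one_add_of_mem_jacobson {x : A} (hx : x ∈ Ring.jacobson A) : IsUnit (1 + x) := by
  have left_inv : ∀ y ∈ Ring.jacobson A, ∃ z, z * (1 + y) = 1 := fun y hy => by
    rw [← Ideal.jacobson_bot] at hy
    obtain ⟨z, hz⟩ := Ideal.mem_jacobson_iff.1 hy 1
    exact ⟨z, by simpa [sub_eq_zero, mul_add, add_comm] using hz⟩
  obtain ⟨z, hz⟩ := left_inv x hx
  -- `z = 1 - z * x` has a left inverse too, so `z` is a unit with inverse `1 + x`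
  obtain ⟨w, hw⟩ := left_inv (-(z * x)) (neg_mem (Ideal.mul_mem_left _ z hx))
  have hwz : w * z = 1 := by rwa [show 1 + -(z * x) = z by rw [← hz]; noncomm_ring] at hw
  exact isUnit_iff_exists.2 ⟨z, left_inv_eq_right_inv hwz hz ▸ hwz, hz⟩

theorem isSemiprimeRing_of_jacobson_eq_bot (h : Ring.jacobson A = ⊥) : IsSemiprimeRing A := by
  intro a ha
  rw [← Ideal.mem_bot, ← h, ← Ideal.jacobson_bot, Ideal.mem_jacobson_iff]
  intro y
  refine ⟨1 - y * a, ?_⟩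
  rw [Ideal.mem_bot]
  calc (1 - y * a) * y * a + (1 - y * a) - 1 = -(y * (a * y * a)) := by noncomm_ring
    _ = 0 := by rw [ha, mul_zero, neg_zero]

end Jacobson

namespace IsLeftPerfectRing

variable {A B : Type*} [Ring A] [Ring B]

theorem of_surjective (h : IsLeftPerfectRing A) (f : A →+* B) (hf : Function.Surjective f) :
    IsLeftPerfectRing B := by
  refine WellFounded.wellFounded_iff_has_min.2 fun X hX => ?_
  obtain ⟨a, ha, hmin⟩ := h.has_min (f ⁻¹' X) (hX.preimage hf)
  refine ⟨f a, ha, ?_⟩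
  rintro _ hy ⟨⟨c, rfl⟩, hnd⟩
  obtain ⟨c, rfl⟩ := hf c
  have : a * c ∣ a := by
    by_contra hac
    exact hmin (a * c) (by simpa using hy) ⟨dvd_mul_right a c, hac⟩
  exact hnd (by simpa using map_dvd f this)

theorem zero_mem_of_forall_exists_mul_mem_jacobson (h : IsLeftPerfectRing A) {X : Set A}
    (hX : X.Nonempty) (hmul : ∀ y ∈ X, ∃ j ∈ Ring.jacobson A, y * j ∈ X) : (0 : A) ∈ X := by
  obtain ⟨y, hy, hmin⟩ := h.has_min X hX
  obtain ⟨j, hj, hyj⟩ := hmul y hy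
  obtain ⟨s, hs⟩ : y * j ∣ y := by
    by_contra hnd
    exact hmin _ hyj ⟨dvd_mul_right y j, hnd⟩
  have hunit : IsUnit (1 + -(j * s)) :=
    isUnit_one_add_of_mem_jacobson (neg_mem (Ideal.mul_mem_right s _ hj))
  have hy0 : y * (1 + -(j * s)) = 0 := by
    rw [mul_add, mul_one, mul_neg, ← mul_assoc, ← hs, add_neg_cancel]
  rwa [hunit.mul_left_eq_zero.1 hy0] at hy

theorem isNilpotent_jacobson [IsNoetherianRing A] (h : IsLeftPerfectRing A) :
    IsNilpotent (Ring.jacobson A) := by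
  set J := Ring.jacobson A
  obtain ⟨n, hn⟩ := monotone_stabilizes_iff_noetherian.2 ‹IsNoetherianRing A›
    ⟨fun t => (J ^ (t + 1)).annihilator,
      fun s t hst => Submodule.annihilator_mono (Ideal.pow_le_pow_right (by omega))⟩
  have hstab : (J ^ (n + 1)).annihilator = (J ^ (n + 1 + 1)).annihilator := hn (n + 1) n.le_succ
  refine ⟨n + 1, ?_⟩
  by_contra hne
  have h1 : (1 : A) ∉ (J ^ (n + 1)).annihilator := fun h1 =>
    hne (eq_bot_iff.2 fun x hx => by simpa using Submodule.mem_annihilator.1 h1 x hx)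
  -- an element not annihilating `J ^ (n + 1)` stays so after multiplying by a suitable `j ∈ J`
  refine h.zero_mem_of_forall_exists_mul_mem_jacobson (X := ((J ^ (n + 1)).annihilator : Set A)ᶜ)
    ⟨1, h1⟩ (fun y hy => ?_) (zero_mem _)
  by_contra! hall
  refine hy (hstab ▸ Submodule.mem_annihilator.2 fun x hx => ?_)
  rw [Submodule.pow_succ' (M := J) n.succ_ne_zero] at hx
  refine Submodule.mul_induction_on hx (fun j hj z hz => ?_) (fun a b ha hb => ?_)
  · rw [smul_eq_mul, ← mul_assoc]
    exact Submodule.mem_annihilator.1 (Set.notMem_compl_iff.1 (hall j hj)) z hz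
  · rw [smul_add, ha, hb, add_zero]

end IsLeftPerfectRing

section Semiprime

variable {A : Type*} [Ring A]

def GeneratesMinimalRightIdeal (c : A) : Prop :=
  c ≠ 0 ∧ ∀ y, y ≠ 0 → c ∣ y → y ∣ c

theorem GeneratesMinimalRightIdeal.of_dvd {c e : A} (hc : GeneratesMinimalRightIdeal c)
    (he : e ≠ 0) (hce : c ∣ e) : GeneratesMinimalRightIdeal e :=
  ⟨he, fun y hy hey => (hc.2 y hy (hce.trans hey)).trans hce⟩

theorem IsLeftPerfectRing.exists_dvd_generatesMinimalRightIdeal (h : IsLeftPerfectRing A)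
    {a : A} (ha : a ≠ 0) : ∃ c, a ∣ c ∧ GeneratesMinimalRightIdeal c := by
  obtain ⟨c, ⟨hc0, hac⟩, hmin⟩ := h.has_min {c | c ≠ 0 ∧ a ∣ c} ⟨a, ha, dvd_rfl⟩
  refine ⟨c, hac, hc0, fun y hy hcy => ?_⟩
  by_contra hyc
  exact hmin y ⟨hy, hac.trans hcy⟩ ⟨hcy, hyc⟩

theorem GeneratesMinimalRightIdeal.exists_isIdempotentElem (hA : IsSemiprimeRing A) {c : A}
    (hc : GeneratesMinimalRightIdeal c) :
    ∃ e, IsIdempotentElem e ∧ c ∣ e ∧ GeneratesMinimalRightIdeal e := by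
  obtain ⟨s, hcsc⟩ : ∃ s, c * s * c ≠ 0 := by
    by_contra! hcA
    exact hc.1 (hA c hcA)
  obtain ⟨t, ht⟩ := hc.2 _ hcsc ⟨s * c, by rw [mul_assoc]⟩
  set e := c * t * s
  have hae : c * s * e = c * s := by
    rw [show c * s * e = c * s * c * t * s by simp only [e, mul_assoc], ← ht]
  have he0 : e ≠ 0 := fun he => hcsc (by rw [← hae, he, mul_zero, zero_mul])
  have hce : c ∣ e := ⟨t * s, by simp only [e, mul_assoc]⟩
  refine ⟨e, ?_, hce, hc.of_dvd he0 hce⟩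
  -- `c * s` kills `e * e - e ∈ c * A`, which would otherwise generate `c * A`
  by_contra hee
  obtain ⟨u, hu⟩ := hc.2 _ (sub_ne_zero.2 hee) (dvd_sub (hce.mul_right e) hce)
  apply hcsc
  calc c * s * c = (c * s * e * e - c * s * e) * u := by rw [hu]; noncomm_ring
    _ = 0 := by rw [hae, hae, sub_self, zero_mul]

theorem GeneratesMinimalRightIdeal.exists_mul_eq_of_isIdempotentElem {e : A}
    (he : IsIdempotentElem e) (hmin : GeneratesMinimalRightIdeal e) {x : A} (hx0 : x ≠ 0)
    (hx : e * x * e = x) : ∃ t, t * x = e := by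
  have mul_e : ∀ x, e * x * e = x → x * e = x := fun x hx => by rw [← hx, mul_assoc, he.eq]
  have right_inv : ∀ x, x ≠ 0 → e * x * e = x → ∃ t, e * t * e = t ∧ x * t = e := by
    intro x hx0 hx
    obtain ⟨t, ht⟩ := hmin.2 x hx0 ⟨x * e, by rw [← mul_assoc, hx]⟩
    have hxe := mul_e x hx
    refine ⟨e * t * e, ?_, ?_⟩
    · rw [show e * (e * t * e) * e = e * e * t * (e * e) by noncomm_ring, he.eq]
    · rw [← mul_assoc, ← mul_assoc, hxe, ← ht, he.eq]
  -- so `e * A * e` is a division ring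
  obtain ⟨t, het, hxt⟩ := right_inv x hx0 hx
  obtain ⟨u, heu, htu⟩ := right_inv t (fun ht => hmin.1 (by rw [← hxt, ht, mul_zero])) het
  have hux : u = x := by
    calc u = e * u := by rw [← heu, ← mul_assoc, ← mul_assoc, he.eq]
      _ = x := by rw [← hxt, mul_assoc, htu, mul_e x hx]
  exact ⟨t, hux ▸ htu⟩

theorem GeneratesMinimalRightIdeal.isSimpleModule_span (hA : IsSemiprimeRing A) {e : A}
    (he : IsIdempotentElem e) (hmin : GeneratesMinimalRightIdeal e) :
    IsSimpleModule A (A ∙ e) := by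
  have generates : ∀ z ∈ A ∙ e, z ≠ 0 → e ∈ A ∙ z := by
    intro z hz hz0
    obtain ⟨r, rfl⟩ := Submodule.mem_span_singleton.1 hz
    rw [smul_eq_mul] at hz0 ⊢
    obtain ⟨s, hs⟩ : ∃ s, r * e * s * (r * e) ≠ 0 := by
      by_contra! hzA
      exact hz0 (hA _ hzA)
    obtain ⟨t, ht⟩ := hmin.exists_mul_eq_of_isIdempotentElem he (x := e * s * (r * e))
      (fun h0 => hs (by rw [show r * e * s * (r * e) = r * (e * s * (r * e)) by noncomm_ring,
        h0, mul_zero]))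
      (by rw [show e * (e * s * (r * e)) * e = e * e * s * r * (e * e) by noncomm_ring, he.eq]
          noncomm_ring)
    refine Submodule.mem_span_singleton.2 ⟨t * e * s, ?_⟩
    calc (t * e * s) • (r * e) = t * (e * s * (r * e)) := by rw [smul_eq_mul]; noncomm_ring
      _ = e := ht
  rw [isSimpleModule_iff_isAtom]
  refine ⟨by simpa [Submodule.span_singleton_eq_bot] using hmin.1, fun b hb => ?_⟩
  by_contra hb0
  obtain ⟨z, hzb, hz0⟩ := (Submodule.ne_bot_iff b).1 hb0
  exact hb.not_ge ((Submodule.span_singleton_le_iff_mem _ _).2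
    ((Submodule.span_singleton_le_iff_mem _ _).2 hzb (generates z (hb.le hzb) hz0)))

theorem IsLeftPerfectRing.exists_isIdempotentElem_mem_sSup_simples (h : IsLeftPerfectRing A)
    (hA : IsSemiprimeRing A) {a : A} (ha : a ≠ 0) :
    ∃ e, IsIdempotentElem e ∧ e ≠ 0 ∧ a ∣ e ∧
      e ∈ sSup {m : Submodule A A | IsSimpleModule A m} := by
  obtain ⟨c, hac, hc⟩ := h.exists_dvd_generatesMinimalRightIdeal ha
  obtain ⟨e, he, hce, hmin⟩ := hc.exists_isIdempotentElem hA
  refine ⟨e, he, hmin.1, hac.trans hce, ?_⟩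
  exact le_sSup (show A ∙ e ∈ {m : Submodule A A | IsSimpleModule A m} from
    hmin.isSimpleModule_span hA he) (Submodule.mem_span_singleton_self e)

theorem IsLeftPerfectRing.exists_orthogonal_isIdempotentElem_mem_sSup_simples
    (h : IsLeftPerfectRing A) (hA : IsSemiprimeRing A) {e : A} (he : IsIdempotentElem e)
    (heW : e ∈ sSup {m : Submodule A A | IsSimpleModule A m}) (he1 : 1 - e ≠ 0) :
    ∃ f, IsIdempotentElem f ∧ f ≠ 0 ∧ e * f = 0 ∧ f * e = 0 ∧
      f ∈ sSup {m : Submodule A A | IsSimpleModule A m} := by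
  obtain ⟨e', he', he'0, ⟨r, hr⟩, he'W⟩ := h.exists_isIdempotentElem_mem_sSup_simples hA he1
  have hee' : e * e' = 0 := by rw [hr, ← mul_assoc, mul_sub, mul_one, he.eq, sub_self, zero_mul]
  refine ⟨e' - e' * e, ?_, fun hf => he'0 ?_, ?_, ?_, sub_mem he'W (Submodule.smul_mem _ e' heW)⟩
  · calc (e' - e' * e) * (e' - e' * e)
        = e' * e' - e' * e' * e - e' * (e * e') + e' * (e * e') * e := by noncomm_ring
      _ = e' - e' * e := by rw [he'.eq, hee', mul_zero, zero_mul, sub_zero, add_zero]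
  · calc e' = e' * e' := he'.eq.symm
      _ = (e' - (e' - e' * e)) * e' := by rw [hf, sub_zero]
      _ = 0 := by rw [sub_sub_cancel, mul_assoc, hee', mul_zero]
  · rw [mul_sub, hee', ← mul_assoc, hee', zero_mul, sub_zero]
  · rw [sub_mul, mul_assoc, he.eq, sub_self]

theorem IsLeftPerfectRing.isSemisimpleRing (h : IsLeftPerfectRing A) (hA : IsSemiprimeRing A) :
    IsSemisimpleRing A := by
  set W := sSup {m : Submodule A A | IsSimpleModule A m}
  refine IsSemisimpleModule.of_sSup_simples_eq_top (eq_top_iff.2 fun x _ => ?_)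
  -- an idempotent `e ∈ W` with `(1 - e) * A` minimal must be `1`
  obtain ⟨_, ⟨e, ⟨he, heW⟩, rfl⟩, hmin⟩ :=
    h.has_min ((1 - ·) '' {e | IsIdempotentElem e ∧ e ∈ W}) ⟨1, 0, ⟨.zero, W.zero_mem⟩, sub_zero 1⟩
  beta_reduce at hmin
  suffices he1 : 1 - e = 0 by
    simpa [← sub_eq_zero.1 he1] using W.smul_mem x heW
  by_contra he1
  obtain ⟨f, hf, hf0, hef, hfe, hfW⟩ :=
    h.exists_orthogonal_isIdempotentElem_mem_sSup_simples hA he heW he1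
  refine hmin (1 - (e + f)) ⟨e + f, ⟨he.add hf (by rw [hef, hfe, add_zero]), W.add_mem heW hfW⟩,
    rfl⟩ ⟨⟨1 - (e + f), ?_⟩, fun ⟨s, hs⟩ => hf0 ?_⟩
  · rw [show (1 - e) * (1 - (e + f)) = 1 - (e + f) - (e - e * e) + e * f by noncomm_ring,
      he.eq, hef, sub_self, sub_zero, add_zero]
  · calc f = f * (1 - e) := by rw [mul_sub, mul_one, hfe, sub_zero]
      _ = (f - f * e - f * f) * s := by rw [hs]; noncomm_ring
      _ = 0 := by rw [hfe, hf.eq, sub_zero, sub_self, zero_mul]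

end Semiprime

theorem IsLeftPerfectRing.isSemiprimaryRing {A : Type*} [Ring A] [IsNoetherianRing A]
    (h : IsLeftPerfectRing A) : IsSemiprimaryRing A :=
  ⟨(h.of_surjective _ Ideal.Quotient.mk_surjective).isSemisimpleRing
    (isSemiprimeRing_of_jacobson_eq_bot (Ring.jacobson_quotient_jacobson A)),
    h.isNilpotent_jacobson⟩

theorem MulOpposite.op_dvd_op_iff_span_singleton_le {R : Type*} [Ring R] {x y : R} :
    op x ∣ op y ↔ Ideal.span {y} ≤ Ideal.span {x} := by
  rw [← rightDvd_iff_op_dvd_op, Ideal.span_singleton_le_iff_mem, Ideal.mem_span_singleton']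
  exact ⟨fun ⟨c, hc⟩ => ⟨c, hc.symm⟩, fun ⟨c, hc⟩ => ⟨c, hc.symm⟩⟩

theorem IsRightPerfectRing.isLeftPerfectRing_mulOpposite {R : Type u} [Ring R]
    (h : IsRightPerfectRing R) : IsLeftPerfectRing Rᵐᵒᵖ := by
  refine wellFounded_iff_isEmpty_descending_chain.2 ⟨fun ⟨g, hg⟩ => ?_⟩
  obtain ⟨N, hN⟩ := h (fun n => (g n).unop)
    (fun n => MulOpposite.op_dvd_op_iff_span_singleton_le.1 (hg n).1)
  exact (hg N).2 (MulOpposite.op_dvd_op_iff_span_singleton_le.2 (hN (N + 1) N.le_succ).ge)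

/-- Every right noetherian right perfect ring is right artinian. -/
theorem stmt9 {R : Type u} [Ring R] (h1 : IsNoetherianRing Rᵐᵒᵖ)
    (h2 : IsRightPerfectRing R) : IsArtinianRing Rᵐᵒᵖ := by
  have := h2.isLeftPerfectRing_mulOpposite.isSemiprimaryRing
  exact IsSemiprimaryRing.isNoetherian_iff_isArtinian.mp h1
end

section
/- Let k be a field, V an infinite-dimensional k-vector space, E the endomorphism ring of V, S the set of endomorphisms of V of finite rank (a two-sided ideal of E), and let R = k·1 + S be the k-subalgebra of E generated by the identity and S. Then the two-sided ideals of R are exactly 0, S and R. -/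
/-! A nonzero ideal `I` of `R = k·1 + S` contains every rank-one operator `φ ⊗ x`: if `f ∈ I` and
`ψ (f v) = 1`, then `(ψ ⊗ x) ∘ f ∘ (φ ⊗ v) = φ ⊗ x`. A finite-rank operator is a finite sum of
rank-one operators (expand its values in a basis of its range), so `S ⊆ I`. If moreover `I ⊄ S`,
then `I` contains some `a • 1 + s` with `a ≠ 0` and `s ∈ S ⊆ I`, hence the unit `a • 1`, so `I = R`. -/

universe u v

variable (k : Type u) (V : Type v) [Field k] [AddCommGroup V] [Module k V]

/-- The set of finite-rank endomorphisms of the `k`-vector space `V`. -/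
def finiteRankEnd : Set (Module.End k V) :=
  {s | FiniteDimensional k (LinearMap.range s)}

variable {k V}

lemma finiteRankEnd.add {s t : Module.End k V} (hs : s ∈ finiteRankEnd k V)
    (ht : t ∈ finiteRankEnd k V) : s + t ∈ finiteRankEnd k V := by
  haveI : FiniteDimensional k (LinearMap.range s) := hs
  haveI : FiniteDimensional k (LinearMap.range t) := ht
  refine Submodule.finiteDimensional_of_le (S₂ := LinearMap.range s ⊔ LinearMap.range t) ?_
  rintro x ⟨v, rfl⟩
  exact Submodule.mem_sup.2 ⟨s v, ⟨v, rfl⟩, t v, ⟨v, rfl⟩, rfl⟩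

lemma finiteRankEnd.neg {s : Module.End k V} (hs : s ∈ finiteRankEnd k V) :
    -s ∈ finiteRankEnd k V := by
  haveI : FiniteDimensional k (LinearMap.range s) := hs
  show FiniteDimensional k (LinearMap.range (-s))
  rw [LinearMap.range_neg]
  exact hs

lemma finiteRankEnd.smul (a : k) {s : Module.End k V} (hs : s ∈ finiteRankEnd k V) :
    a • s ∈ finiteRankEnd k V := by
  haveI : FiniteDimensional k (LinearMap.range s) := hs
  refine Submodule.finiteDimensional_of_le (S₂ := LinearMap.range s) ?_
  rintro x ⟨v, rfl⟩
  exact ⟨a • v, by simp⟩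

lemma finiteRankEnd.mul_left (f : Module.End k V) {s : Module.End k V}
    (hs : s ∈ finiteRankEnd k V) : s * f ∈ finiteRankEnd k V := by
  haveI : FiniteDimensional k (LinearMap.range s) := hs
  refine Submodule.finiteDimensional_of_le (S₂ := LinearMap.range s) ?_
  rintro x ⟨v, rfl⟩
  exact ⟨f v, rfl⟩

lemma finiteRankEnd.mul_right (f : Module.End k V) {s : Module.End k V}
    (hs : s ∈ finiteRankEnd k V) : f * s ∈ finiteRankEnd k V := by
  haveI : FiniteDimensional k (LinearMap.range s) := hs
  show FiniteDimensional k (LinearMap.range (f * s))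
  rw [Module.End.mul_eq_comp, LinearMap.range_comp]
  infer_instance

variable (k V) in
/-- The subring `R = k·1 + S` of the endomorphism ring of `V`, where `S` is the
set of finite-rank endomorphisms. -/
def kPlusFiniteRank : Subring (Module.End k V) where
  carrier := {f | ∃ a : k, ∃ s ∈ finiteRankEnd k V, f = a • 1 + s}
  zero_mem' := ⟨0, 0, by
    show FiniteDimensional k (LinearMap.range (0 : Module.End k V))
    rw [LinearMap.range_zero]; infer_instance, by simp⟩
  one_mem' := ⟨1, 0, by
    show FiniteDimensional k (LinearMap.range (0 : Module.End k V))
    rw [LinearMap.range_zero]; infer_instance, by simp⟩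
  add_mem' := by
    rintro f g ⟨a, s, hs, rfl⟩ ⟨b, t, ht, rfl⟩
    exact ⟨a + b, s + t, finiteRankEnd.add hs ht, by rw [add_smul]; abel⟩
  neg_mem' := by
    rintro f ⟨a, s, hs, rfl⟩
    exact ⟨-a, -s, finiteRankEnd.neg hs, by rw [neg_smul]; abel⟩
  mul_mem' := by
    rintro f g ⟨a, s, hs, rfl⟩ ⟨b, t, ht, rfl⟩
    refine ⟨a * b, a • t + b • s + s * t, ?_, ?_⟩
    · exact finiteRankEnd.add (finiteRankEnd.add (finiteRankEnd.smul a ht)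
        (finiteRankEnd.smul b hs)) ((finiteRankEnd.mul_left t) hs)
    · simp only [mul_add, add_mul, smul_mul_assoc, mul_smul_comm, one_mul, mul_one]
      module

open Module

lemma finiteRankEnd.zero : (0 : Module.End k V) ∈ finiteRankEnd k V := by
  show FiniteDimensional k (LinearMap.range (0 : Module.End k V))
  rw [LinearMap.range_zero]
  infer_instance

lemma finiteRankEnd.smulRight (φ : Dual k V) (x : V) : φ.smulRight x ∈ finiteRankEnd k V :=
  Submodule.finiteDimensional_of_le (S₂ := k ∙ x) <| by
    rintro _ ⟨v, rfl⟩
    exact Submodule.mem_span_singleton.2 ⟨φ v, rfl⟩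

lemma finiteRankEnd.exists_eq_sum_smulRight {s : Module.End k V} (hs : s ∈ finiteRankEnd k V) :
    ∃ (n : ℕ) (φ : Fin n → Dual k V) (x : Fin n → V), s = ∑ i, (φ i).smulRight (x i) := by
  have : FiniteDimensional k (LinearMap.range s) := hs
  let b := finBasis k (LinearMap.range s)
  refine ⟨_, fun i ↦ b.coord i ∘ₗ s.rangeRestrict, fun i ↦ b i, LinearMap.ext fun v ↦ ?_⟩
  have h := congrArg Subtype.val (b.sum_repr (s.rangeRestrict v))
  rw [Submodule.coe_sum] at h
  simpa using h.symm

lemma smulRight_mul_mul_smulRight (ψ φ : Dual k V) (x v : V) (f : Module.End k V) :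
    ψ.smulRight x * f * φ.smulRight v = φ.smulRight (ψ (f v) • x) := by
  ext w
  simp [smul_smul]

namespace kPlusFiniteRank

lemma smul_one_add_mem (a : k) {s : Module.End k V} (hs : s ∈ finiteRankEnd k V) :
    a • 1 + s ∈ kPlusFiniteRank k V :=
  ⟨a, s, hs, rfl⟩

lemma mem_of_mem_finiteRankEnd {s : Module.End k V} (hs : s ∈ finiteRankEnd k V) :
    s ∈ kPlusFiniteRank k V := by
  simpa using smul_one_add_mem 0 hs

lemma smul_one_mem (a : k) : a • 1 ∈ kPlusFiniteRank k V := by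
  simpa using smul_one_add_mem a (finiteRankEnd.zero (k := k) (V := V))

variable (k V) in
def finiteRankIdeal : TwoSidedIdeal (kPlusFiniteRank k V) :=
  .mk' {f | (f : Module.End k V) ∈ finiteRankEnd k V} finiteRankEnd.zero finiteRankEnd.add
    finiteRankEnd.neg (fun {x _} hy ↦ finiteRankEnd.mul_right (x : Module.End k V) hy)
    (fun {_ y} hx ↦ finiteRankEnd.mul_left (y : Module.End k V) hx)

lemma coe_finiteRankIdeal : (finiteRankIdeal k V : Set (kPlusFiniteRank k V)) =
    {f : kPlusFiniteRank k V | (f : Module.End k V) ∈ finiteRankEnd k V} :=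
  TwoSidedIdeal.coe_mk' ..

@[simp]
lemma mem_finiteRankIdeal {f : kPlusFiniteRank k V} :
    f ∈ finiteRankIdeal k V ↔ (f : Module.End k V) ∈ finiteRankEnd k V :=
  TwoSidedIdeal.mem_mk' ..

def rankOne (φ : Dual k V) (x : V) : kPlusFiniteRank k V :=
  ⟨φ.smulRight x, mem_of_mem_finiteRankEnd (finiteRankEnd.smulRight φ x)⟩

lemma rankOne_mem_of_ne_bot {I : TwoSidedIdeal (kPlusFiniteRank k V)} (hI : I ≠ ⊥)
    (φ : Dual k V) (x : V) : rankOne φ x ∈ I := by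
  obtain ⟨f, hfI, hf⟩ : ∃ f ∈ I, f ≠ 0 := by
    by_contra! h
    exact hI (eq_bot_iff.2 fun f hf ↦ (TwoSidedIdeal.mem_bot _).2 (h f hf))
  obtain ⟨v, hv⟩ : ∃ v, (f : Module.End k V) v ≠ 0 := by
    by_contra! h
    exact hf (Subtype.ext (LinearMap.ext h))
  obtain ⟨ψ, hψ⟩ := Projective.exists_dual_eq_one k hv
  have hprod : rankOne ψ x * f * rankOne φ v = rankOne φ x :=
    Subtype.ext <| by simp [rankOne, smulRight_mul_mul_smulRight, hψ]
  exact hprod ▸ I.mul_mem_right _ _ (I.mul_mem_left _ _ hfI)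

lemma finiteRankIdeal_le_of_ne_bot {I : TwoSidedIdeal (kPlusFiniteRank k V)} (hI : I ≠ ⊥) :
    finiteRankIdeal k V ≤ I := by
  intro f hf
  obtain ⟨n, φ, x, hsum⟩ := finiteRankEnd.exists_eq_sum_smulRight (mem_finiteRankIdeal.1 hf)
  have : f = ∑ i, rankOne (φ i) (x i) := Subtype.ext <| by simpa [rankOne] using hsum
  exact this ▸ I.finsetSum_mem _ _ fun i _ ↦ rankOne_mem_of_ne_bot hI _ _

lemma eq_top_of_not_le_finiteRankIdeal {I : TwoSidedIdeal (kPlusFiniteRank k V)}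
    (hI : ¬ I ≤ finiteRankIdeal k V) : I = ⊤ := by
  have hS : finiteRankIdeal k V ≤ I := finiteRankIdeal_le_of_ne_bot (by rintro rfl; simp at hI)
  obtain ⟨f, hfI, hf⟩ := SetLike.not_le_iff_exists.1 hI
  obtain ⟨a, s, hs, hfs⟩ := f.2
  have ha : a ≠ 0 := by
    rintro rfl
    exact hf (mem_finiteRankIdeal.2 (by simpa [hfs] using hs))
  let s' : kPlusFiniteRank k V := ⟨s, mem_of_mem_finiteRankEnd hs⟩
  have hsub : f - s' ∈ I := I.sub_mem hfI (hS (mem_finiteRankIdeal.2 hs))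
  have hone : ⟨a⁻¹ • 1, smul_one_mem a⁻¹⟩ * (f - s') = 1 :=
    Subtype.ext <| by simp [s', hfs, smul_smul, mul_inv_cancel₀ ha]
  exact I.eq_top (hone ▸ I.mul_mem_left _ _ hsub)

lemma eq_bot_or_eq_finiteRankIdeal_or_eq_top (I : TwoSidedIdeal (kPlusFiniteRank k V)) :
    I = ⊥ ∨ I = finiteRankIdeal k V ∨ I = ⊤ := by
  by_cases hI : I ≤ finiteRankIdeal k V
  · exact or_iff_not_imp_left.2 fun hbot ↦
      .inl (le_antisymm hI (finiteRankIdeal_le_of_ne_bot hbot))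
  · exact .inr (.inr (eq_top_of_not_le_finiteRankIdeal hI))

end kPlusFiniteRank

open kPlusFiniteRank in
theorem stmt13_general (k : Type u) (V : Type v) [Field k] [AddCommGroup V] [Module k V] :
    {s : Set (kPlusFiniteRank k V) |
        ∃ I : TwoSidedIdeal (kPlusFiniteRank k V), (I : Set (kPlusFiniteRank k V)) = s} =
      { ({0} : Set (kPlusFiniteRank k V)),
        {f : kPlusFiniteRank k V | (f : Module.End k V) ∈ finiteRankEnd k V},
        Set.univ } := by
  ext s
  simp only [Set.mem_insert_iff, Set.mem_singleton_iff]
  constructor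
  · rintro ⟨I, rfl⟩
    rcases eq_bot_or_eq_finiteRankIdeal_or_eq_top I with rfl | rfl | rfl
    exacts [.inl (TwoSidedIdeal.coe_bot _), .inr (.inl coe_finiteRankIdeal),
      .inr (.inr (TwoSidedIdeal.coe_top _))]
  · rintro (rfl | rfl | rfl)
    exacts [⟨⊥, TwoSidedIdeal.coe_bot _⟩, ⟨_, coe_finiteRankIdeal⟩, ⟨⊤, TwoSidedIdeal.coe_top _⟩]

/-- For an infinite-dimensional vector space `V` over a field `k`, the two-sided ideals
of `R = k·1 + S` (where `S` is the ideal of finite-rank endomorphisms) are exactly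
`0`, `S` and `R`. -/
theorem stmt13 (k : Type u) (V : Type v) [Field k] [AddCommGroup V] [Module k V]
    (hV : ¬ Module.Finite k V) :
    {s : Set (kPlusFiniteRank k V) |
        ∃ I : TwoSidedIdeal (kPlusFiniteRank k V), (I : Set (kPlusFiniteRank k V)) = s} =
      { ({0} : Set (kPlusFiniteRank k V)),
        {f : kPlusFiniteRank k V | (f : Module.End k V) ∈ finiteRankEnd k V},
        Set.univ } :=
  stmt13_general k V
end

section
/- Let k be a field, V an infinite-dimensional k-vector space, E the endomorphism ring of V, S the set of endomorphisms of V of finite rank, and let R = k·1 + S be the k-subalgebra of E generated by the identity and S. Then the Jacobson radical of R is zero. -/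
/-!
If `z ≠ 0` lies in a subring `R` of `End V` containing all rank-one maps, choose `v` with
`z v ≠ 0` and a rank-one `g ∈ R` with `g (z v) = v`. Then `1 - g z` kills `v`, so it is not
left invertible, whereas every element of the form `1 + r z` with `z` in the Jacobson radical is.
-/

universe u v

variable (k : Type u) (V : Type v) [Field k] [AddCommGroup V] [Module k V]

variable {k V}

theorem smulRight_mem_finiteRankEnd (φ : Module.Dual k V) (v : V) :
    φ.smulRight v ∈ finiteRankEnd k V :=
  Submodule.finiteDimensional_of_le (S₂ := k ∙ v) <| by
    rintro _ ⟨w, rfl⟩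
    exact Submodule.smul_mem _ _ (Submodule.mem_span_singleton_self v)

theorem jacobson_bot_eq_bot_of_forall_smulRight_mem {R : Subring (Module.End k V)}
    (hR : ∀ (φ : Module.Dual k V) (v : V), φ.smulRight v ∈ R) :
    Ideal.jacobson (⊥ : Ideal R) = ⊥ := by
  refine eq_bot_iff.2 fun z hz => Ideal.mem_bot.2 ?_
  by_contra hz0
  obtain ⟨v, hv⟩ := DFunLike.ne_iff.1 (by exact_mod_cast hz0 : (z : Module.End k V) ≠ 0)
  obtain ⟨φ, hφ⟩ := Module.Projective.exists_dual_eq_one k hv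
  let g : R := ⟨φ.smulRight v, hR φ v⟩
  obtain ⟨w, hw⟩ := Ideal.exists_mul_add_sub_mem_of_mem_jacobson _
    (neg_mem (Ideal.mul_mem_left _ g hz))
  rw [Ideal.mem_bot, sub_eq_zero] at hw
  -- evaluate `w * (1 - g z) = 1` at `v`, where `(1 - g z) v = v - φ (z v) • v = 0`
  have hv0 : v = 0 := by
    simpa [g, hφ] using (congrArg (fun f : R => (f : Module.End k V) v) hw).symm
  exact hv (by simp [hv0])

theorem stmt14_general (k : Type u) (V : Type v) [Field k] [AddCommGroup V] [Module k V] :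
    Ideal.jacobson (⊥ : Ideal (kPlusFiniteRank k V)) = ⊥ :=
  jacobson_bot_eq_bot_of_forall_smulRight_mem fun φ v =>
    ⟨0, φ.smulRight v, smulRight_mem_finiteRankEnd φ v, by simp⟩

/-- For an infinite-dimensional vector space `V` over a field `k`, the Jacobson radical
(the intersection of the maximal left ideals) of `R = k·1 + S` is zero. -/
theorem stmt14 (k : Type u) (V : Type v) [Field k] [AddCommGroup V] [Module k V]
    (hV : ¬ Module.Finite k V) :
    Ideal.jacobson (⊥ : Ideal (kPlusFiniteRank k V)) = ⊥ :=
  stmt14_general k V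
end

section
/- Let R be a ring and let I, J be two-sided ideals of R with I ∩ J = 0. If neither R/I nor R/J contains an infinite orthogonal set of idempotents, then R contains no infinite orthogonal set of idempotents. -/
universe u

/-- A set `E` of elements of a ring is an *orthogonal set of idempotents* if its elements
are nonzero idempotents and `e * f = f * e = 0` for all distinct `e, f ∈ E`. -/
def IsOrthogonalIdempotentSet {R : Type u} [Ring R] (E : Set R) : Prop :=
  (∀ e ∈ E, IsIdempotentElem e ∧ e ≠ 0) ∧
    ∀ e ∈ E, ∀ f ∈ E, e ≠ f → e * f = 0 ∧ f * e = 0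

lemma orth_image_aux {R : Type u} {S : Type*} [Ring R] [Ring S] (f : R →+* S) {E : Set R}
    (hE : IsOrthogonalIdempotentSet E) :
    IsOrthogonalIdempotentSet (f '' {e ∈ E | f e ≠ 0}) ∧
    Set.InjOn f {e ∈ E | f e ≠ 0} := by
  obtain ⟨h1, h2⟩ := hE
  have hinj : Set.InjOn f {e ∈ E | f e ≠ 0} := by
    rintro a ⟨haE, ha0⟩ b ⟨hbE, hb0⟩ hab
    by_contra hne
    apply ha0
    have h := (h2 a haE b hbE hne).1
    have hz : f a * f b = 0 := by rw [← map_mul, h, map_zero]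
    have hia := (h1 a haE).1
    calc f a = f a * f a := by rw [← map_mul, hia]
    _ = f a * f b := by rw [hab]
    _ = 0 := hz
  refine ⟨⟨?_, ?_⟩, hinj⟩
  · rintro x ⟨e, ⟨heE, he0⟩, rfl⟩
    refine ⟨?_, he0⟩
    have := congrArg f (h1 e heE).1
    simpa [IsIdempotentElem, map_mul] using this
  · rintro x ⟨e, ⟨heE, he0⟩, rfl⟩ y ⟨g, ⟨hgE, hg0⟩, rfl⟩ hxy
    have hne : e ≠ g := fun h => hxy (by rw [h])
    obtain ⟨hm1, hm2⟩ := h2 e heE g hgE hne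
    constructor <;> rw [← map_mul] <;> simp [hm1, hm2]

/-- If `I` and `J` are two-sided ideals of `R` with `I ∩ J = 0`, and neither `R/I` nor
`R/J` contains an infinite orthogonal set of idempotents, then `R` contains no infinite
orthogonal set of idempotents. -/
theorem stmt15 {R : Type u} [Ring R] (I J : TwoSidedIdeal R) (hIJ : I ⊓ J = ⊥)
    (hI : ¬ ∃ E : Set I.ringCon.Quotient, IsOrthogonalIdempotentSet E ∧ E.Infinite)
    (hJ : ¬ ∃ E : Set J.ringCon.Quotient, IsOrthogonalIdempotentSet E ∧ E.Infinite) :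
    ¬ ∃ E : Set R, IsOrthogonalIdempotentSet E ∧ E.Infinite := by
  rintro ⟨E, hE, hinf⟩
  set πI : R →+* I.ringCon.Quotient := I.ringCon.mk' with hπI
  set πJ : R →+* J.ringCon.Quotient := J.ringCon.mk' with hπJ
  have hmemI : ∀ x : R, πI x = 0 ↔ x ∈ I := by
    intro x
    rw [TwoSidedIdeal.mem_iff]
    exact RingCon.eq _
  have hmemJ : ∀ x : R, πJ x = 0 ↔ x ∈ J := by
    intro x
    rw [TwoSidedIdeal.mem_iff]
    exact RingCon.eq _
  have hcover : E ⊆ {e ∈ E | πI e ≠ 0} ∪ {e ∈ E | πJ e ≠ 0} := by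
    intro e he
    by_cases h : πI e = 0
    · right
      refine ⟨he, fun h' => ?_⟩
      have : e ∈ I ⊓ J := (TwoSidedIdeal.mem_inf R).2 ⟨(hmemI e).1 h, (hmemJ e).1 h'⟩
      rw [hIJ, TwoSidedIdeal.mem_bot] at this
      exact (hE.1 e he).2 this
    · exact Or.inl ⟨he, h⟩
  rcases (Set.infinite_union).1 (hinf.mono hcover) with h | h
  · obtain ⟨horth, hinjon⟩ := orth_image_aux πI hE
    exact hI ⟨_, horth, h.image hinjon⟩
  · obtain ⟨horth, hinjon⟩ := orth_image_aux πJ hE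
    exact hJ ⟨_, horth, h.image hinjon⟩
end

section
/- Let R be a ring and let K be a two-sided ideal of R with K² = 0. If every nonzero left R/K-module contains a simple submodule, then every nonzero left R-module contains a simple submodule. -/
universe u

/-- An `R`-module annihilated by a two-sided ideal `K` is an `R/K`-module. -/
def annihilatedModule {R : Type u} [Ring R] (K : TwoSidedIdeal R) {M : Type*}
    [AddCommGroup M] [Module R M] (hann : ∀ a ∈ K, ∀ m : M, a • m = 0) :
    Module K.ringCon.Quotient M where
  smul q m := Quotient.liftOn' q (fun r => r • m) (fun a b hab => by
    have h1 : a - b ∈ K := (K.rel_iff a b).1 hab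
    have h2 := hann _ h1 m
    rw [sub_smul, sub_eq_zero] at h2
    exact h2)
  one_smul m := one_smul R m
  mul_smul q q' m := Quotient.inductionOn₂' q q' fun a b => mul_smul a b m
  smul_add q m m' := Quotient.inductionOn' q fun a => smul_add a m m'
  smul_zero q := Quotient.inductionOn' q fun a => smul_zero a
  add_smul q q' m := Quotient.inductionOn₂' q q' fun a b => add_smul a b m
  zero_smul m := zero_smul R m

/-- Let `K` be a two-sided ideal of `R` with `K² = 0`. If every nonzero left `R/K`-module
contains a simple submodule, then every nonzero left `R`-module contains a simple
submodule. -/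
theorem stmt16 {R : Type u} [Ring R] (K : TwoSidedIdeal R)
    (hK : ∀ a ∈ K, ∀ b ∈ K, a * b = 0)
    (h : ∀ (M : Type u) (_ : AddCommGroup M) (_ : Module K.ringCon.Quotient M),
      Nontrivial M → ∃ S : Submodule K.ringCon.Quotient M,
        IsSimpleModule K.ringCon.Quotient S) :
    ∀ (M : Type u) (_ : AddCommGroup M) (_ : Module R M), Nontrivial M →
      ∃ S : Submodule R M, IsSimpleModule R S := by
  intro M _ _ hM
  -- the submodule of `M` annihilated by `K`
  set N : Submodule R M :=
    { carrier := {m | ∀ a ∈ K, a • m = 0}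
      zero_mem' := fun a _ => smul_zero a
      add_mem' := fun {x y} hx hy a ha => by rw [smul_add, hx a ha, hy a ha, add_zero]
      smul_mem' := fun r x hx a ha => by
        rw [← mul_smul]
        exact hx _ (K.mul_mem_right a r ha) } with hN
  have hmemN : ∀ m : M, m ∈ N ↔ ∀ a ∈ K, a • m = 0 := fun m => Iff.rfl
  -- `N` is nontrivial
  have hNnt : Nontrivial N := by
    obtain ⟨x, hx⟩ := exists_ne (0 : M)
    by_cases hx0 : ∀ a ∈ K, a • x = 0
    · exact nontrivial_of_ne ⟨x, hx0⟩ 0 (fun hc => hx (congrArg Subtype.val hc))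
    · push_neg at hx0
      obtain ⟨a, ha, hax⟩ := hx0
      have hmem : a • x ∈ N := fun b hb => by
        rw [← mul_smul, hK b hb a ha, zero_smul]
      exact nontrivial_of_ne ⟨a • x, hmem⟩ 0 (fun hc => hax (congrArg Subtype.val hc))
  have hann : ∀ a ∈ K, ∀ n : N, a • n = 0 := fun a ha n => Subtype.ext (n.2 a ha)
  letI : Module K.ringCon.Quotient N := annihilatedModule K hann
  haveI : IsScalarTower R K.ringCon.Quotient N :=
    ⟨fun r q n => Quotient.inductionOn' q fun s => show ((r * s : R) : K.ringCon.Quotient) • n = r • (s • n) from mul_smul r s n⟩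
  obtain ⟨S, hS⟩ := h N inferInstance inferInstance hNnt
  -- restrict scalars to get an `R`-submodule of `N`
  haveI : RingHomSurjective (K.ringCon.mk') :=
    ⟨fun q => Quotient.inductionOn' q fun r => ⟨r, rfl⟩⟩
  set SR : Submodule R N := S.restrictScalars R with hSR
  let ℓ : SR →ₛₗ[K.ringCon.mk'] S :=
    { toFun := fun x => ⟨x.1, x.2⟩
      map_add' := fun _ _ => rfl
      map_smul' := fun _ _ => rfl }
  have hℓ : Function.Bijective ℓ :=
    ⟨fun a b hab => Subtype.ext (congrArg Subtype.val hab), fun y => ⟨⟨y.1, y.2⟩, rfl⟩⟩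
  haveI hSRs : IsSimpleModule R SR := (ℓ.isSimpleModule_iff_of_bijective hℓ).2 hS
  refine ⟨SR.map N.subtype, ?_⟩
  exact IsSimpleModule.congr (Submodule.equivMapOfInjective N.subtype N.injective_subtype SR).symm
end
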